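/- arXiv:1901.01476 — 8 statements merged into one kernel-verified Lean document; each statement's English description precedes it below -/
import Mathlib

section
/- Let c and d be real constants and suppose that for every n, every Θ6-graph on n points in general position has a matching of size at least cn+d (i.e., μ(n) ≥ cn+d), with c < 1. Then for every n, β(n) ≥ (cn+d)/(1−c), where β(n) is the minimum over all sets P of n points in general position of the minimum size of a blocking set of G⋆(P). -/
noncomputable section

/-- Points in the plane. -/
abbrev Pt : Type := ℝ × ℝ

/-- `P` is in general position: no line through two points of `P` makes an angle of
0°, 60°, or 120° with the horizontal. -/
def GenPos (P : Finset Pt) : Prop :=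
  ∀ p ∈ P, ∀ q ∈ P, p ≠ q →
    p.2 ≠ q.2 ∧
    q.2 - p.2 ≠ Real.sqrt 3 * (q.1 - p.1) ∧
    q.2 - p.2 ≠ -Real.sqrt 3 * (q.1 - p.1)

/-- First cone coordinate (height). -/
def cA (z : Pt) : ℝ := z.2
/-- Second cone coordinate. -/
def cB (z : Pt) : ℝ := Real.sqrt 3 * z.1 + z.2
/-- Third cone coordinate. -/
def cC (z : Pt) : ℝ := -Real.sqrt 3 * z.1 + z.2

/-- The smallest upward equilateral triangle (horizontal bottom side) having both
`p` and `q` on its boundary, as a closed set. -/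
def upTri (p q : Pt) : Set Pt :=
  {x | min (cA p) (cA q) ≤ cA x ∧ cB x ≤ max (cB p) (cB q) ∧ cC x ≤ max (cC p) (cC q)}

/-- The interior of `upTri p q`. -/
def upTriInt (p q : Pt) : Set Pt :=
  {x | min (cA p) (cA q) < cA x ∧ cB x < max (cB p) (cB q) ∧ cC x < max (cC p) (cC q)}

/-- The smallest downward equilateral triangle (horizontal top side) having both
`p` and `q` on its boundary, as a closed set. -/
def downTri (p q : Pt) : Set Pt :=
  {x | cA x ≤ max (cA p) (cA q) ∧ min (cB p) (cB q) ≤ cB x ∧ min (cC p) (cC q) ≤ cC x}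

/-- The interior of `downTri p q`. -/
def downTriInt (p q : Pt) : Set Pt :=
  {x | cA x < max (cA p) (cA q) ∧ min (cB p) (cB q) < cB x ∧ min (cC p) (cC q) < cC x}

lemma upTriInt_comm (p q : Pt) : upTriInt p q = upTriInt q p := by
  ext x
  simp only [upTriInt, Set.mem_setOf_eq]
  rw [min_comm (cA p) (cA q), max_comm (cB p) (cB q), max_comm (cC p) (cC q)]

lemma downTriInt_comm (p q : Pt) : downTriInt p q = downTriInt q p := by
  ext x
  simp only [downTriInt, Set.mem_setOf_eq]
  rw [max_comm (cA p) (cA q), min_comm (cB p) (cB q), min_comm (cC p) (cC q)]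

/-- `upTri p q` is empty with respect to `P`: its interior contains no point of `P`. -/
def EmptyUp (P : Finset Pt) (p q : Pt) : Prop := ∀ r ∈ P, r ∉ upTriInt p q

/-- `downTri p q` is empty with respect to `P`: its interior contains no point of `P`. -/
def EmptyDown (P : Finset Pt) (p q : Pt) : Prop := ∀ r ∈ P, r ∉ downTriInt p q

/-- The Θ₆-graph `G⋆(P)`: vertices are the points of `P`, and `p` is adjacent to `q`
iff `△(p,q)` or `▽(p,q)` is empty with respect to `P`. -/
def theta6 (P : Finset Pt) : SimpleGraph {x // x ∈ P} where
  Adj p q := p ≠ q ∧ (EmptyUp P p.1 q.1 ∨ EmptyDown P p.1 q.1)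
  symm := by
    constructor
    rintro p q ⟨hne, h⟩
    refine ⟨hne.symm, ?_⟩
    unfold EmptyUp EmptyDown at h ⊢
    rcases h with h | h
    · exact Or.inl (by rw [upTriInt_comm]; exact h)
    · exact Or.inr (by rw [downTriInt_comm]; exact h)
  loopless := ⟨fun p h => h.1 rfl⟩

/-- `B` blocks `G⋆(P)`: every empty triangle introducing an edge of `G⋆(P)` contains a
point of `B` in its interior. -/
def Blocks (P B : Finset Pt) : Prop :=
  ∀ p ∈ P, ∀ q ∈ P, p ≠ q →
    (EmptyUp P p q → ∃ b ∈ B, b ∈ upTriInt p q) ∧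
    (EmptyDown P p q → ∃ b ∈ B, b ∈ downTriInt p q)

/-- `betaMin n`: the minimum, over sets `P` of `n` points in general position, of the
minimum size of a blocking set of `G⋆(P)`. -/
def betaMin (n : ℕ) : ℕ :=
  sInf {k | ∃ P B : Finset Pt, P.card = n ∧ GenPos P ∧ Blocks P B ∧ B.card = k}

/-- An (up or down) triangle described by two points and an orientation flag:
its interior. -/
def triIntr (t : Pt × Pt × Bool) : Set Pt :=
  if t.2.2 then upTriInt t.1 t.2.1 else downTriInt t.1 t.2.1

/-- An (up or down) triangle described by two points and an orientation flag:
the closed triangle. -/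
def triCl (t : Pt × Pt × Bool) : Set Pt :=
  if t.2.2 then upTri t.1 t.2.1 else downTri t.1 t.2.1

/-- `t` describes an empty triangle of `P` (one that introduces an edge of `G⋆(P)`). -/
def IsEmptyTriOf (P : Finset Pt) (t : Pt × Pt × Bool) : Prop :=
  t.1 ∈ P ∧ t.2.1 ∈ P ∧ t.1 ≠ t.2.1 ∧ ∀ r ∈ P, r ∉ triIntr t

/-!
A blocking set `B` of `P` can be moved, point by point within small open neighbourhoods, so that
it still blocks `P` and `P ∪ B` is in general position. In `G⋆(P ∪ B)` no two points of `P`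
are adjacent: the triangle introducing such an edge would be empty for `P`, hence contain a
point of `B`. So a matching of `G⋆(P ∪ B)` has at most `|B|` edges, and the matching bound for
`n + |B|` points gives `c (n + |B|) + d ≤ |B|`.

General position means that each of the cone coordinates `cA`, `cB`, `cC` is injective on `P`.
Then the midpoint of two points lies in the interior of both of their triangles (so blocking sets
exist), and along a vertical line all three coordinates grow at unit rate, which makes the
perturbation explicit.
-/

open Filter Topology

section MinMax

variable {K : Type*} [Field K] [LinearOrder K] [IsStrictOrderedRing K] {a b : K}

lemma min_lt_add_div_two (h : a ≠ b) : min a b < (a + b) / 2 := by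
  rcases h.lt_or_gt with h | h
  · rw [min_eq_left h.le]; linarith
  · rw [min_eq_right h.le]; linarith

lemma add_div_two_lt_max (h : a ≠ b) : (a + b) / 2 < max a b := by
  rcases h.lt_or_gt with h | h
  · rw [max_eq_right h.le]; linarith
  · rw [max_eq_left h.le]; linarith

end MinMax

lemma SimpleGraph.Subgraph.IsMatching.ncard_edgeSet_le {V : Type*} {G : SimpleGraph V}
    {M : G.Subgraph} (hM : M.IsMatching) {C : Set V} (hC : C.Finite)
    (hcover : ∀ ⦃u v⦄, M.Adj u v → u ∈ C ∨ v ∈ C) : M.edgeSet.ncard ≤ C.ncard := by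
  classical
  let e : V → Sym2 V := fun v => if hv : v ∈ M.verts then hM.toEdge ⟨v, hv⟩ else s(v, v)
  have hsub : M.edgeSet ⊆ e '' C := by
    intro x hx
    induction x using Sym2.ind with
    | _ u v =>
      have huv : M.Adj u v := hx
      rcases hcover huv with hu | hv
      · exact ⟨u, hu, by simp [e, huv.fst_mem, hM.toEdge_eq_of_adj huv]⟩
      · exact ⟨v, hv, by simp [e, huv.snd_mem, hM.toEdge_eq_of_adj huv.symm, Sym2.eq_swap]⟩
  calc M.edgeSet.ncard ≤ (e '' C).ncard := Set.ncard_le_ncard hsub (hC.image e)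
    _ ≤ C.ncard := Set.ncard_image_le hC

/-- The segment `pq` is parallel to no side of the equilateral triangles. -/
def ConeSeparated (p q : Pt) : Prop := cA p ≠ cA q ∧ cB p ≠ cB q ∧ cC p ≠ cC q

lemma ConeSeparated.ne {p q : Pt} (h : ConeSeparated p q) : p ≠ q :=
  fun hpq => h.1 (congrArg cA hpq)

lemma ConeSeparated.symm {p q : Pt} (h : ConeSeparated p q) : ConeSeparated q p :=
  ⟨h.1.symm, h.2.1.symm, h.2.2.symm⟩

lemma genPos_iff_pairwise_coneSeparated (P : Finset Pt) :
    GenPos P ↔ (P : Set Pt).Pairwise ConeSeparated := by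
  refine forall₄_congr fun p _ q _ => imp_congr_right fun _ => ?_
  simp only [ConeSeparated, cA, cB, cC]
  refine and_congr Iff.rfl (and_comm.trans (and_congr ?_ ?_)) <;>
    exact not_congr ⟨fun h => by linarith, fun h => by linarith⟩

lemma genPos_insert {Q : Finset Pt} {x : Pt} (hQ : GenPos Q)
    (hx : ∀ p ∈ Q, ConeSeparated x p) : GenPos (insert x Q) := by
  rw [genPos_iff_pairwise_coneSeparated] at hQ ⊢
  rw [Finset.coe_insert, Set.pairwise_insert]
  exact ⟨hQ, fun p hp _ => ⟨hx p hp, (hx p hp).symm⟩⟩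

lemma cone_coords_add_vertical (b : Pt) (t : ℝ) :
    cA (b + (0, t)) = cA b + t ∧ cB (b + (0, t)) = cB b + t ∧ cC (b + (0, t)) = cC b + t := by
  simp only [cA, cB, cC, Prod.fst_add, Prod.snd_add, add_zero]
  exact ⟨trivial, by ring, by ring⟩

lemma exists_genPos (n : ℕ) : ∃ P : Finset Pt, P.card = n ∧ GenPos P := by
  have hinj : Function.Injective fun i : ℕ => ((0 : ℝ), (i : ℝ)) := fun i j h => by
    simpa using congrArg Prod.snd h
  refine ⟨(Finset.range n).image _, Finset.card_image_of_injective _ hinj ▸ Finset.card_range n,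
    ?_⟩
  rw [genPos_iff_pairwise_coneSeparated, Finset.coe_image]
  rintro _ ⟨i, -, rfl⟩ _ ⟨j, -, rfl⟩ hij
  have hij : (i : ℝ) ≠ j := fun h => hij (by simp only [h])
  simpa [ConeSeparated, cA, cB, cC] using hij

lemma exists_mem_coneSeparated_of_mem_nhds (S : Finset Pt) {b : Pt} {U : Set Pt}
    (hU : U ∈ 𝓝 b) : ∃ x ∈ U, ∀ p ∈ S, ConeSeparated x p := by
  have hcont : Tendsto (fun t : ℝ => b + (0, t)) (𝓝 0) (𝓝 b) := by
    simpa only [Prod.mk_zero_zero, add_zero] using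
      (Continuous.tendsto (by fun_prop) 0 : Tendsto (fun t : ℝ => b + (0, t)) _ _)
  have hV : (fun t : ℝ => b + (0, t)) ⁻¹' U ∈ 𝓝 0 := hcont hU
  have hbad : (⋃ p ∈ S, {t : ℝ | ¬ConeSeparated (b + (0, t)) p}).Finite := by
    refine S.finite_toSet.biUnion fun p _ =>
      Set.Finite.subset (s := {cA p - cA b, cB p - cB b, cC p - cC b}) (by simp) ?_
    intro t ht
    simp only [Set.mem_ofPred_eq, ConeSeparated, cone_coords_add_vertical, not_and_or,
      not_not] at ht
    simp only [Set.mem_insert_iff, Set.mem_singleton_iff]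
    rcases ht with h | h | h
    exacts [.inl (by linarith), .inr (.inl (by linarith)), .inr (.inr (by linarith))]
  obtain ⟨t, htU, ht⟩ := ((infinite_of_mem_nhds 0 hV).sdiff hbad).nonempty
  simp only [Set.mem_iUnion, Set.mem_ofPred_eq, not_exists, not_not] at ht
  exact ⟨_, htU, ht⟩

lemma exists_genPos_union_of_mem_nhds {Q : Finset Pt} (hQ : GenPos Q) (U : Pt → Set Pt)
    (hU : ∀ b, U b ∈ 𝓝 b) (B : Finset Pt) :
    ∃ B' : Finset Pt, B'.card ≤ B.card ∧ Disjoint Q B' ∧ GenPos (Q ∪ B') ∧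
      ∀ b ∈ B, ∃ b' ∈ B', b' ∈ U b := by
  classical
  induction B using Finset.induction_on with
  | empty => exact ⟨∅, le_rfl, Finset.disjoint_empty_right Q, by simpa using hQ, by simp⟩
  | @insert a B ha ih =>
    obtain ⟨B', hcard, hdisj, hgen, hU'⟩ := ih
    obtain ⟨x, hxU, hx⟩ := exists_mem_coneSeparated_of_mem_nhds (Q ∪ B') (hU a)
    refine ⟨insert x B', ?_, ?_, ?_, ?_⟩
    · rw [Finset.card_insert_of_notMem ha]
      exact (Finset.card_insert_le x B').trans (by omega)
    · exact Finset.disjoint_insert_right.2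
        ⟨fun hxQ => (hx x (Finset.mem_union_left _ hxQ)).ne rfl, hdisj⟩
    · rw [Finset.union_insert]
      exact genPos_insert hgen hx
    · simp only [Finset.forall_mem_insert, Finset.exists_mem_insert]
      exact ⟨.inl hxU, fun b hb => .inr (hU' b hb)⟩

lemma cone_coords_midpoint (p q : Pt) :
    cA (midpoint ℝ p q) = (cA p + cA q) / 2 ∧ cB (midpoint ℝ p q) = (cB p + cB q) / 2 ∧
      cC (midpoint ℝ p q) = (cC p + cC q) / 2 := by
  simp only [cA, cB, cC, midpoint_eq_smul_add, Prod.smul_fst, Prod.smul_snd, Prod.fst_add,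
    Prod.snd_add, smul_eq_mul, invOf_eq_inv]
  exact ⟨by ring, by ring, by ring⟩

lemma ConeSeparated.midpoint_mem_upTriInt {p q : Pt} (h : ConeSeparated p q) :
    midpoint ℝ p q ∈ upTriInt p q := by
  obtain ⟨hA, hB, hC⟩ := cone_coords_midpoint p q
  rw [upTriInt, Set.mem_ofPred_eq, hA, hB, hC]
  exact ⟨min_lt_add_div_two h.1, add_div_two_lt_max h.2.1, add_div_two_lt_max h.2.2⟩

lemma ConeSeparated.midpoint_mem_downTriInt {p q : Pt} (h : ConeSeparated p q) :
    midpoint ℝ p q ∈ downTriInt p q := by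
  obtain ⟨hA, hB, hC⟩ := cone_coords_midpoint p q
  rw [downTriInt, Set.mem_ofPred_eq, hA, hB, hC]
  exact ⟨add_div_two_lt_max h.1, min_lt_add_div_two h.2.1, min_lt_add_div_two h.2.2⟩

lemma blocks_image₂_midpoint {P : Finset Pt} (hP : GenPos P) :
    Blocks P (Finset.image₂ (midpoint ℝ) P P) := by
  rw [genPos_iff_pairwise_coneSeparated] at hP
  intro p hp q hq hpq
  have hm := Finset.mem_image₂_of_mem (f := midpoint ℝ) hp hq
  exact ⟨fun _ => ⟨_, hm, (hP hp hq hpq).midpoint_mem_upTriInt⟩,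
    fun _ => ⟨_, hm, (hP hp hq hpq).midpoint_mem_downTriInt⟩⟩

lemma continuous_cA : Continuous cA := by unfold cA; fun_prop
lemma continuous_cB : Continuous cB := by unfold cB; fun_prop
lemma continuous_cC : Continuous cC := by unfold cC; fun_prop

lemma isOpen_upTriInt (p q : Pt) : IsOpen (upTriInt p q) :=
  (isOpen_lt continuous_const continuous_cA).inter
    ((isOpen_lt continuous_cB continuous_const).inter (isOpen_lt continuous_cC continuous_const))

lemma isOpen_downTriInt (p q : Pt) : IsOpen (downTriInt p q) :=
  (isOpen_lt continuous_cA continuous_const).inter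
    ((isOpen_lt continuous_const continuous_cB).inter (isOpen_lt continuous_const continuous_cC))

def triangleNhd (P : Finset Pt) (b : Pt) : Set Pt :=
  {x | ∀ p ∈ P, ∀ q ∈ P, (b ∈ upTriInt p q → x ∈ upTriInt p q) ∧
    (b ∈ downTriInt p q → x ∈ downTriInt p q)}

lemma triangleNhd_mem_nhds (P : Finset Pt) (b : Pt) : triangleNhd P b ∈ 𝓝 b := by
  have hopen : ∀ T : Set Pt, IsOpen T → ∀ᶠ x in 𝓝 b, b ∈ T → x ∈ T := fun T hT =>
    eventually_imp_distrib_left.2 hT.mem_nhds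
  exact (eventually_all_finset P).2 fun p _ => (eventually_all_finset P).2 fun q _ =>
    (hopen _ (isOpen_upTriInt p q)).and (hopen _ (isOpen_downTriInt p q))

lemma Blocks.of_mem_triangleNhd {P B B' : Finset Pt} (hB : Blocks P B)
    (h : ∀ b ∈ B, ∃ b' ∈ B', b' ∈ triangleNhd P b) : Blocks P B' := by
  intro p hp q hq hpq
  refine ⟨fun he => ?_, fun he => ?_⟩
  · obtain ⟨b, hb, hbT⟩ := (hB p hp q hq hpq).1 he
    obtain ⟨b', hb', hb'T⟩ := h b hb
    exact ⟨b', hb', (hb'T p hp q hq).1 hbT⟩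
  · obtain ⟨b, hb, hbT⟩ := (hB p hp q hq hpq).2 he
    obtain ⟨b', hb', hb'T⟩ := h b hb
    exact ⟨b', hb', (hb'T p hp q hq).2 hbT⟩

lemma Blocks.exists_genPos_union {P B : Finset Pt} (hP : GenPos P) (hB : Blocks P B) :
    ∃ B' : Finset Pt,
      B'.card ≤ B.card ∧ Disjoint P B' ∧ GenPos (P ∪ B') ∧ Blocks P B' := by
  obtain ⟨B', hcard, hdisj, hgen, hB'⟩ :=
    exists_genPos_union_of_mem_nhds hP (triangleNhd P) (triangleNhd_mem_nhds P) B
  exact ⟨B', hcard, hdisj, hgen, hB.of_mem_triangleNhd hB'⟩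

lemma Blocks.mem_or_mem_of_adj {P B : Finset Pt} (hB : Blocks P B) {u v : {x // x ∈ P ∪ B}}
    (huv : (theta6 (P ∪ B)).Adj u v) : (u : Pt) ∈ B ∨ (v : Pt) ∈ B := by
  by_contra! h
  have huP : (u : Pt) ∈ P := (Finset.mem_union.1 u.2).resolve_right h.1
  have hvP : (v : Pt) ∈ P := (Finset.mem_union.1 v.2).resolve_right h.2
  obtain ⟨hne, hempty | hempty⟩ := huv
  · obtain ⟨b, hb, hbT⟩ := (hB u huP v hvP (Subtype.coe_ne_coe.2 hne)).1
      fun r hr => hempty r (Finset.mem_union_left B hr)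
    exact hempty b (Finset.mem_union_right P hb) hbT
  · obtain ⟨b, hb, hbT⟩ := (hB u huP v hvP (Subtype.coe_ne_coe.2 hne)).2
      fun r hr => hempty r (Finset.mem_union_left B hr)
    exact hempty b (Finset.mem_union_right P hb) hbT

/-- If every Θ₆-graph on `n` points in general position has a matching of size at least
`c·n + d` (with `c < 1`), then `β(n) ≥ (c·n + d)/(1 − c)` for every `n`. -/
theorem beta_lower_bound_of_matching_bound (c d : ℝ) (hc : c < 1)
    (hmu : ∀ P : Finset Pt, GenPos P →
      ∃ M : (theta6 P).Subgraph, M.IsMatching ∧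
        c * (P.card : ℝ) + d ≤ (M.edgeSet.ncard : ℝ)) :
    ∀ n : ℕ, (c * (n : ℝ) + d) / (1 - c) ≤ (betaMin n : ℝ) := by
  intro n
  obtain ⟨P₀, hP₀n, hP₀⟩ := exists_genPos n
  obtain ⟨P, B, hPn, hP, hB, hBmin⟩ : betaMin n ∈
      {k | ∃ P B : Finset Pt, P.card = n ∧ GenPos P ∧ Blocks P B ∧ B.card = k} :=
    Nat.sInf_mem ⟨_, P₀, _, hP₀n, hP₀, blocks_image₂_midpoint hP₀, rfl⟩
  obtain ⟨B', hB'B, hdisj, hgen, hB'⟩ := hB.exists_genPos_union hP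
  obtain ⟨M, hM, hMcard⟩ := hmu _ hgen
  have hcover : M.edgeSet.ncard ≤ B'.card :=
    calc M.edgeSet.ncard ≤ {v : {x // x ∈ P ∪ B'} | (v : Pt) ∈ B'}.ncard :=
          hM.ncard_edgeSet_le (Set.toFinite _) fun _ _ huv =>
            hB'.mem_or_mem_of_adj (M.adj_sub huv)
      _ ≤ (B' : Set Pt).ncard :=
          Set.ncard_le_ncard_of_injOn _ (fun _ hv => hv) Subtype.val_injective.injOn
      _ = B'.card := Set.ncard_coe_finset B'
  have hcard : ((P ∪ B').card : ℝ) = n + B'.card := by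
    rw [Finset.card_union_of_disjoint hdisj, hPn, Nat.cast_add]
  have hB'B : (B'.card : ℝ) ≤ betaMin n := by exact_mod_cast hBmin ▸ hB'B
  have hcover : (M.edgeSet.ncard : ℝ) ≤ B'.card := by exact_mod_cast hcover
  rw [hcard] at hMcard
  rw [div_le_iff₀ (sub_pos.2 hc)]
  linarith [mul_le_mul_of_nonneg_left hB'B (sub_pos.2 hc).le]
end
end

section
/- For every n ≥ 1, β(n+1) ≤ β(n) + 1, where β(n) is the minimum over all sets P of n points in the plane in general position of the minimum size of a blocking set of the Θ6-graph G⋆(P). -/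
noncomputable section

/-! Take a point set `P` of size `n` with a minimum blocking set `B`, choose a bound `M` on all
three cone coordinates of `P`, and add the point `z = (0, M + 1)`. In cone coordinates `z`
dominates every point of `P`, so the new set is still in general position, and the single point
`b = (0, M)` lies inside both triangles spanned by `z` and any point of `P`. Triangles between two
old points that are empty for `P ∪ {z}` were already empty for `P`, hence blocked by `B`; so
`B ∪ {b}` blocks the new set. Iterating this step from `P = B = ∅` shows that every size `n` is
realised, so the infimum defining `betaMin n` is attained. -/

open Finset

@[simp] lemma cA_zero_mk (t : ℝ) : cA (0, t) = t := rfl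

@[simp] lemma cB_zero_mk (t : ℝ) : cB (0, t) = t := by simp [cB]

@[simp] lemma cC_zero_mk (t : ℝ) : cC (0, t) = t := by simp [cC]

lemma genPos_iff {P : Finset Pt} :
    GenPos P ↔ ∀ p ∈ P, ∀ q ∈ P, p ≠ q → cA p ≠ cA q ∧ cB p ≠ cB q ∧ cC p ≠ cC q := by
  refine forall₄_congr fun p _ q _ => imp_congr_right fun _ => ?_
  simp only [cA, cB, cC]
  constructor
  · rintro ⟨hA, hC, hB⟩
    exact ⟨hA, fun h => hB (by linarith), fun h => hC (by linarith)⟩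
  · rintro ⟨hA, hB, hC⟩
    exact ⟨hA, fun h => hC (by linarith), fun h => hB (by linarith)⟩

lemma GenPos.insert {P : Finset Pt} {z : Pt} (hP : GenPos P)
    (hz : ∀ p ∈ P, cA p ≠ cA z ∧ cB p ≠ cB z ∧ cC p ≠ cC z) : GenPos (insert z P) := by
  rw [genPos_iff] at hP ⊢
  intro p hp q hq hne
  rw [mem_insert] at hp hq
  rcases hp with rfl | hp <;> rcases hq with rfl | hq
  · exact absurd rfl hne
  · obtain ⟨hA, hB, hC⟩ := hz q hq
    exact ⟨hA.symm, hB.symm, hC.symm⟩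
  · exact hz p hp
  · exact hP p hp q hq hne

lemma EmptyUp.of_subset {P Q : Finset Pt} {p q : Pt} (hPQ : P ⊆ Q) (h : EmptyUp Q p q) :
    EmptyUp P p q :=
  fun r hr => h r (hPQ hr)

lemma EmptyDown.of_subset {P Q : Finset Pt} {p q : Pt} (hPQ : P ⊆ Q) (h : EmptyDown Q p q) :
    EmptyDown P p q :=
  fun r hr => h r (hPQ hr)

lemma Blocks.insert {P B : Finset Pt} {z b : Pt} (hB : Blocks P B)
    (hb : ∀ q ∈ P, b ∈ upTriInt z q ∧ b ∈ downTriInt z q) :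
    Blocks (insert z P) (insert b B) := by
  intro p hp q hq hne
  rw [mem_insert] at hp hq
  rcases hp with rfl | hp <;> rcases hq with rfl | hq
  · exact absurd rfl hne
  · exact ⟨fun _ => ⟨b, mem_insert_self _ _, (hb q hq).1⟩,
      fun _ => ⟨b, mem_insert_self _ _, (hb q hq).2⟩⟩
  · rw [upTriInt_comm, downTriInt_comm]
    exact ⟨fun _ => ⟨b, mem_insert_self _ _, (hb p hp).1⟩,
      fun _ => ⟨b, mem_insert_self _ _, (hb p hp).2⟩⟩
  · obtain ⟨hup, hdown⟩ := hB p hp q hq hne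
    refine ⟨fun he => ?_, fun he => ?_⟩
    · obtain ⟨c, hc, hcq⟩ := hup (he.of_subset (subset_insert z P))
      exact ⟨c, mem_insert_of_mem hc, hcq⟩
    · obtain ⟨c, hc, hcq⟩ := hdown (he.of_subset (subset_insert z P))
      exact ⟨c, mem_insert_of_mem hc, hcq⟩

lemma exists_cone_bound (P : Finset Pt) : ∃ M, ∀ p ∈ P, cA p < M ∧ cB p < M ∧ cC p < M := by
  obtain ⟨M, hM⟩ := (P.image fun p => max (cA p) (max (cB p) (cC p))).exists_le
  refine ⟨M + 1, fun p hp => ?_⟩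
  have hp := max_le_iff.1 (hM _ (mem_image_of_mem _ hp))
  have hBC := max_le_iff.1 hp.2
  exact ⟨by linarith [hp.1], by linarith [hBC.1], by linarith [hBC.2]⟩

lemma zero_mk_mem_upTriInt_and_downTriInt {q : Pt} {s t : ℝ}
    (hq : cA q < s ∧ cB q < s ∧ cC q < s) (hst : s < t) :
    ((0, s) : Pt) ∈ upTriInt (0, t) q ∧ ((0, s) : Pt) ∈ downTriInt (0, t) q := by
  simp only [upTriInt, downTriInt, Set.mem_ofPred_eq, cA_zero_mk, cB_zero_mk, cC_zero_mk]
  exact ⟨⟨(min_le_right _ _).trans_lt hq.1, hst.trans_le (le_max_left _ _),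
      hst.trans_le (le_max_left _ _)⟩,
    ⟨hst.trans_le (le_max_left _ _), (min_le_right _ _).trans_lt hq.2.1,
      (min_le_right _ _).trans_lt hq.2.2⟩⟩

theorem exists_insert_genPos_blocks {P B : Finset Pt} (hP : GenPos P) (hB : Blocks P B) :
    ∃ P' B' : Finset Pt, P'.card = P.card + 1 ∧ GenPos P' ∧ Blocks P' B' ∧
      B'.card ≤ B.card + 1 := by
  obtain ⟨M, hM⟩ := exists_cone_bound P
  have hz : ∀ p ∈ P, cA p < M + 1 ∧ cB p < M + 1 ∧ cC p < M + 1 := fun p hp =>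
    ⟨(hM p hp).1.trans (lt_add_one M), (hM p hp).2.1.trans (lt_add_one M),
      (hM p hp).2.2.trans (lt_add_one M)⟩
  have hzP : ((0, M + 1) : Pt) ∉ P := fun h => lt_irrefl _ (hz _ h).1
  refine ⟨insert (0, M + 1) P, insert (0, M) B, card_insert_of_notMem hzP, ?_, ?_,
    card_insert_le _ _⟩
  · refine hP.insert fun p hp => ?_
    simp only [cA_zero_mk, cB_zero_mk, cC_zero_mk]
    exact ⟨(hz p hp).1.ne, (hz p hp).2.1.ne, (hz p hp).2.2.ne⟩
  · exact hB.insert fun q hq => zero_mk_mem_upTriInt_and_downTriInt (hM q hq) (lt_add_one M)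

lemma betaMin_le {P B : Finset Pt} (hP : GenPos P) (hB : Blocks P B) : betaMin P.card ≤ B.card :=
  Nat.sInf_le ⟨P, B, rfl, hP, hB, rfl⟩

lemma exists_card_eq_betaMin (n : ℕ) :
    ∃ P B : Finset Pt, P.card = n ∧ GenPos P ∧ Blocks P B ∧ B.card = betaMin n := by
  suffices h : ∀ n, ∃ P B : Finset Pt, P.card = n ∧ GenPos P ∧ Blocks P B by
    obtain ⟨P, B, hn, hP, hB⟩ := h n
    have hne : {k | ∃ P B : Finset Pt, P.card = n ∧ GenPos P ∧ Blocks P B ∧ B.card = k}.Nonempty :=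
      ⟨B.card, P, B, hn, hP, hB, rfl⟩
    exact Nat.sInf_mem hne
  intro n
  induction n with
  | zero => exact ⟨∅, ∅, rfl, by simp [GenPos], by simp [Blocks]⟩
  | succ n ih =>
    obtain ⟨P, B, rfl, hP, hB⟩ := ih
    obtain ⟨P', B', hcard, hP', hB', -⟩ := exists_insert_genPos_blocks hP hB
    exact ⟨P', B', hcard, hP', hB'⟩

theorem beta_succ_le_general (n : ℕ) : betaMin (n + 1) ≤ betaMin n + 1 := by
  obtain ⟨P, B, rfl, hP, hB, hBmin⟩ := exists_card_eq_betaMin n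
  obtain ⟨P', B', hcard, hP', hB', hB'card⟩ := exists_insert_genPos_blocks hP hB
  calc betaMin (P.card + 1) = betaMin P'.card := by rw [hcard]
    _ ≤ B'.card := betaMin_le hP' hB'
    _ ≤ B.card + 1 := hB'card
    _ = betaMin P.card + 1 := by rw [hBmin]

/-- For every `n ≥ 1`, `β(n+1) ≤ β(n) + 1`. -/
theorem beta_succ_le (n : ℕ) (hn : 1 ≤ n) : betaMin (n + 1) ≤ betaMin n + 1 :=
  beta_succ_le_general n
end
end

section
/- For every n ≥ 1, β(n) ≤ n − 1, where β(n) is the minimum over all sets P of n points in the plane in general position of the minimum size of a blocking set of the Θ6-graph G⋆(P). -/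
noncomputable section

/-!
Place the `n` points on the line `y = x`, which makes none of the forbidden angles. Both
triangles spanned by two points of that line contain the open segment between them, so a
triangle is empty only for two consecutive points, and the `n - 1` midpoints of consecutive
points block all of them.
-/

open Finset

def diagPt (t : ℝ) : Pt := (t, t)

lemma diagPt_injective : Function.Injective diagPt := fun _ _ h => congrArg Prod.fst h

lemma one_lt_sqrt_three : 1 < √3 := by
  rw [← Real.sqrt_one]; gcongr; norm_num

lemma genPos_image_diagPt (S : Finset ℝ) : GenPos (S.image diagPt) := by
  intro p hp q hq hpq
  obtain ⟨a, -, rfl⟩ := mem_image.1 hp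
  obtain ⟨b, -, rfl⟩ := mem_image.1 hq
  have hba : b - a ≠ 0 := sub_ne_zero.2 fun h => hpq (h ▸ rfl)
  have h3 := one_lt_sqrt_three
  simp only [diagPt]
  refine ⟨fun h => hpq (h ▸ rfl), fun h => ?_, fun h => ?_⟩
  · have : (√3 - 1) * (b - a) = 0 := by linarith
    rcases mul_eq_zero.1 this with h | h <;> [linarith; exact hba h]
  · have : (√3 + 1) * (b - a) = 0 := by linarith
    rcases mul_eq_zero.1 this with h | h <;> [linarith; exact hba h]

/- Along the diagonal `cA` and `cB` increase while `cC` decreases. -/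
lemma diagPt_mem_upTriInt {a b x : ℝ} (hax : a < x) (hxb : x < b) :
    diagPt x ∈ upTriInt (diagPt a) (diagPt b) := by
  have h3 := one_lt_sqrt_three
  simp only [upTriInt, diagPt, cA, cB, cC, min_lt_iff, lt_max_iff]
  refine ⟨Or.inl hax, Or.inr ?_, Or.inl ?_⟩ <;> nlinarith

lemma diagPt_mem_downTriInt {a b x : ℝ} (hax : a < x) (hxb : x < b) :
    diagPt x ∈ downTriInt (diagPt a) (diagPt b) := by
  have h3 := one_lt_sqrt_three
  simp only [downTriInt, diagPt, cA, cB, cC, min_lt_iff, lt_max_iff]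
  refine ⟨Or.inr hxb, Or.inl ?_, Or.inr ?_⟩ <;> nlinarith

lemma exists_mem_image_diagPt_of_empty {S T : Finset ℝ} {a b : ℝ} {U : Set Pt}
    (hU : ∀ x, a < x → x < b → diagPt x ∈ U) (hsep : ∃ x ∈ S ∪ T, a < x ∧ x < b)
    (hempty : ∀ r ∈ S.image diagPt, r ∉ U) : ∃ c ∈ T.image diagPt, c ∈ U := by
  obtain ⟨x, hx, hax, hxb⟩ := hsep
  rcases mem_union.1 hx with hxS | hxT
  · exact absurd (hU x hax hxb) (hempty _ (mem_image_of_mem _ hxS))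
  · exact ⟨diagPt x, mem_image_of_mem _ hxT, hU x hax hxb⟩

theorem blocks_image_diagPt {S T : Finset ℝ}
    (hsep : ∀ a ∈ S, ∀ b ∈ S, a < b → ∃ x ∈ S ∪ T, a < x ∧ x < b) :
    Blocks (S.image diagPt) (T.image diagPt) := by
  have ordered : ∀ a ∈ S, ∀ b ∈ S, a < b →
      (EmptyUp (S.image diagPt) (diagPt a) (diagPt b) →
        ∃ c ∈ T.image diagPt, c ∈ upTriInt (diagPt a) (diagPt b)) ∧
      (EmptyDown (S.image diagPt) (diagPt a) (diagPt b) →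
        ∃ c ∈ T.image diagPt, c ∈ downTriInt (diagPt a) (diagPt b)) :=
    fun a ha b hb hab =>
      ⟨exists_mem_image_diagPt_of_empty (fun _ => diagPt_mem_upTriInt) (hsep a ha b hb hab),
        exists_mem_image_diagPt_of_empty (fun _ => diagPt_mem_downTriInt) (hsep a ha b hb hab)⟩
  intro p hp q hq hpq
  obtain ⟨a, ha, rfl⟩ := mem_image.1 hp
  obtain ⟨b, hb, rfl⟩ := mem_image.1 hq
  rcases (show a ≠ b from fun h => hpq (h ▸ rfl)).lt_or_gt with hab | hba
  · exact ordered a ha b hb hab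
  · unfold EmptyUp EmptyDown
    rw [upTriInt_comm, downTriInt_comm]
    exact ordered b hb a ha hba

lemma exists_nat_or_half_between {n i j : ℕ} (hj : j < n) (hij : i < j) :
    ∃ x ∈ (range n).image (Nat.cast : ℕ → ℝ) ∪
        (range (n - 1)).image (fun k : ℕ => (k : ℝ) + 1 / 2), (i : ℝ) < x ∧ x < j := by
  rcases (Nat.succ_le_of_lt hij).eq_or_lt with hji | hji
  · refine ⟨i + 1 / 2, mem_union_right _ (mem_image_of_mem _ (mem_range.2 (by omega))), ?_, ?_⟩
    · linarith
    · rw [← hji]; push_cast; linarith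
  · refine ⟨(i + 1 : ℕ), mem_union_left _ (mem_image_of_mem _ (mem_range.2 (by omega))), ?_, ?_⟩
    · push_cast; linarith
    · exact_mod_cast hji

theorem beta_le_n_sub_one_general (n : ℕ) : betaMin n ≤ n - 1 := by
  set S : Finset ℝ := (range n).image Nat.cast
  set T : Finset ℝ := (range (n - 1)).image fun k : ℕ => (k : ℝ) + 1 / 2
  have hsep : ∀ a ∈ S, ∀ b ∈ S, a < b → ∃ x ∈ S ∪ T, a < x ∧ x < b := by
    intro a ha b hb hab
    obtain ⟨i, -, rfl⟩ := mem_image.1 ha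
    obtain ⟨j, hj, rfl⟩ := mem_image.1 hb
    exact exists_nat_or_half_between (mem_range.1 hj) (by exact_mod_cast hab)
  have hcardS : (S.image diagPt).card = n := by
    rw [card_image_of_injective _ diagPt_injective,
      card_image_of_injective _ Nat.cast_injective, card_range]
  have hcardT : (T.image diagPt).card = n - 1 := by
    rw [card_image_of_injective _ diagPt_injective,
      card_image_of_injective _ fun k l h => by exact_mod_cast add_right_cancel h, card_range]
  exact Nat.sInf_le ⟨_, _, hcardS, genPos_image_diagPt S, blocks_image_diagPt hsep, hcardT⟩

/-- For every `n ≥ 1`, `β(n) ≤ n − 1`. -/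
theorem beta_le_n_sub_one (n : ℕ) (hn : 1 ≤ n) : betaMin n ≤ n - 1 :=
  beta_le_n_sub_one_general n
end
end

section
/- Let P be a set of points in the plane in general position, let S ⊆ P, and let RC ⊆ P∖S be a set of points containing exactly one point from each connected component of the subgraph of G⋆(P) induced on P∖S. Then S blocks the Θ6-graph G⋆(RC): for every edge (c₁,c₂) of G⋆(RC), the empty (with respect to RC) triangle △(c₁,c₂) or ▽(c₁,c₂) introducing that edge contains a point of S in its interior. -/
noncomputable section

/-!
If the triangle `T(p, q)` spanned by two points `p, q` of `P ∖ S` contains no point of `S`,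
then `p` and `q` are connected in `G⋆(P) ∖ S`: either `T(p, q)` is empty with respect to `P`
and `pq` is an edge, or it contains some `r ∈ P ∖ S`, and the triangles `T(p, r)` and `T(r, q)`
are nested in `T(p, q)` and miss `r`, so induction on the number of points of `P` inside the
triangle gives paths `p ⇝ r ⇝ q`. Two distinct representatives lie in different components,
hence each triangle they span contains a point of `S`.
-/

open scoped Finset

open Classical in
theorem Finset.card_filter_mem_lt_of_subset {α : Type*} (P : Finset α) {A B : Set α}
    (hAB : A ⊆ B) {r : α} (hrP : r ∈ P) (hrB : r ∈ B) (hrA : r ∉ A) :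
    #{x ∈ P | x ∈ A} < #{x ∈ P | x ∈ B} := by
  refine Finset.card_lt_card <| (Finset.ssubset_iff_of_subset ?_).2 ⟨r, ?_, ?_⟩
  · exact Finset.monotone_filter_right P fun _ _ h => hAB h
  · exact Finset.mem_filter.2 ⟨hrP, hrB⟩
  · exact fun h => hrA (Finset.mem_filter.1 h).2

/-- Models the interiors `T p q` of the smallest homothets of a fixed shape with `p` and `q` on
their boundary. -/
structure IsSpanFamily {α : Type*} (T : α → α → Set α) : Prop where
  symm : ∀ p q, T p q = T q p
  right_not_mem : ∀ p q, q ∉ T p q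
  left_subset : ∀ {p q r}, r ∈ T p q → T p r ⊆ T p q

namespace IsSpanFamily

variable {α : Type*} {T : α → α → Set α}

theorem left_not_mem (hT : IsSpanFamily T) (p q : α) : p ∉ T p q :=
  hT.symm p q ▸ hT.right_not_mem q p

theorem right_subset (hT : IsSpanFamily T) {p q r : α} (hr : r ∈ T p q) :
    T r q ⊆ T p q := by
  rw [hT.symm r q, hT.symm p q] at *
  exact hT.left_subset hr

theorem reachable_induce_of_forall_not_mem (hT : IsSpanFamily T) {P S : Finset α}
    {G : SimpleGraph {x // x ∈ P}}
    (hG : ∀ p q (hp : p ∈ P) (hq : q ∈ P), p ≠ q → (∀ r ∈ P, r ∉ T p q) →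
      G.Adj ⟨p, hp⟩ ⟨q, hq⟩)
    {p q : α} (hp : p ∈ P) (hq : q ∈ P) (hpS : p ∉ S) (hqS : q ∉ S)
    (hS : ∀ s ∈ S, s ∉ T p q) :
    (G.induce {v : {x // x ∈ P} | v.1 ∉ S}).Reachable ⟨⟨p, hp⟩, hpS⟩ ⟨⟨q, hq⟩, hqS⟩ := by
  classical
  induction hn : #{x ∈ P | x ∈ T p q} using Nat.strong_induction_on generalizing p q with
  | _ n ih =>
  by_cases hempty : ∀ r ∈ P, r ∉ T p q
  · by_cases hpq : p = q
    · subst hpq; rfl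
    · exact SimpleGraph.Adj.reachable (hG p q hp hq hpq hempty)
  push Not at hempty
  obtain ⟨r, hrP, hrT⟩ := hempty
  have hrS : r ∉ S := fun hr => hS r hr hrT
  have hlt {A : Set α} (hA : A ⊆ T p q) (hrA : r ∉ A) : #{x ∈ P | x ∈ A} < n :=
    hn ▸ P.card_filter_mem_lt_of_subset hA hrP hrT hrA
  have hpr := ih _ (hlt (hT.left_subset hrT) (hT.right_not_mem p r)) hp hrP hpS hrS
    (fun s hs h => hS s hs (hT.left_subset hrT h)) rfl
  have hrq := ih _ (hlt (hT.right_subset hrT) (hT.left_not_mem r q)) hrP hq hrS hqS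
    (fun s hs h => hS s hs (hT.right_subset hrT h)) rfl
  exact hpr.trans hrq

end IsSpanFamily

theorem cB_add_cC (z : Pt) : cB z + cC z = 2 * cA z := by
  simp only [cA, cB, cC]; ring

theorem isSpanFamily_upTriInt : IsSpanFamily upTriInt where
  symm := upTriInt_comm
  right_not_mem p q := by
    rintro ⟨hA, hB, hC⟩
    simp only [min_lt_iff, lt_max_iff, lt_self_iff_false, or_false] at hA hB hC
    linarith [cB_add_cC p, cB_add_cC q]
  left_subset := by
    rintro p q r ⟨hA, hB, hC⟩ x ⟨hxA, hxB, hxC⟩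
    exact ⟨(le_min (min_le_left _ _) hA.le).trans_lt hxA,
      hxB.trans_le (max_le (le_max_left _ _) hB.le),
      hxC.trans_le (max_le (le_max_left _ _) hC.le)⟩

theorem isSpanFamily_downTriInt : IsSpanFamily downTriInt where
  symm := downTriInt_comm
  right_not_mem p q := by
    rintro ⟨hA, hB, hC⟩
    simp only [min_lt_iff, lt_max_iff, lt_self_iff_false, or_false] at hA hB hC
    linarith [cB_add_cC p, cB_add_cC q]
  left_subset := by
    rintro p q r ⟨hA, hB, hC⟩ x ⟨hxA, hxB, hxC⟩
    exact ⟨hxA.trans_le (max_le (le_max_left _ _) hA.le),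
      (le_min (min_le_left _ _) hB.le).trans_lt hxB,
      (le_min (min_le_left _ _) hC.le).trans_lt hxC⟩

theorem theta6_adj_of_emptyUp {P : Finset Pt} {p q : Pt} (hp : p ∈ P) (hq : q ∈ P)
    (hpq : p ≠ q) (h : EmptyUp P p q) : (theta6 P).Adj ⟨p, hp⟩ ⟨q, hq⟩ :=
  ⟨fun h' => hpq (congrArg Subtype.val h'), Or.inl h⟩

theorem theta6_adj_of_emptyDown {P : Finset Pt} {p q : Pt} (hp : p ∈ P) (hq : q ∈ P)
    (hpq : p ≠ q) (h : EmptyDown P p q) : (theta6 P).Adj ⟨p, hp⟩ ⟨q, hq⟩ :=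
  ⟨fun h' => hpq (congrArg Subtype.val h'), Or.inr h⟩

theorem SimpleGraph.eq_of_reachable_of_existsUnique_rep {V : Type*} {G : SimpleGraph V}
    {R : V → Prop}
    (hrep : ∀ C : G.ConnectedComponent, ∃! v, R v ∧ G.connectedComponentMk v = C)
    {u v : V} (hu : R u) (hv : R v) (huv : G.Reachable u v) : u = v := by
  obtain ⟨w, -, huniq⟩ := hrep (G.connectedComponentMk v)
  exact (huniq u ⟨hu, ConnectedComponent.sound huv⟩).trans (huniq v ⟨hv, rfl⟩).symm

theorem representatives_blocked_general (P S RC : Finset Pt)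
    (hRC : RC ⊆ P \ S)
    (hrep : ∀ C : ((theta6 P).induce {v : {x // x ∈ P} | v.1 ∉ S}).ConnectedComponent,
      ∃! v : {v : {x // x ∈ P} | v.1 ∉ S},
        v.1.1 ∈ RC ∧
        ((theta6 P).induce {v : {x // x ∈ P} | v.1 ∉ S}).connectedComponentMk v = C) :
    Blocks RC S := by
  intro p hp q hq hpq
  obtain ⟨hpP, hpS⟩ := Finset.mem_sdiff.1 (hRC hp)
  obtain ⟨hqP, hqS⟩ := Finset.mem_sdiff.1 (hRC hq)
  have hit : ∀ T : Pt → Pt → Set Pt, IsSpanFamily T →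
      (∀ p q (hp : p ∈ P) (hq : q ∈ P), p ≠ q → (∀ r ∈ P, r ∉ T p q) →
        (theta6 P).Adj ⟨p, hp⟩ ⟨q, hq⟩) → ∃ s ∈ S, s ∈ T p q := by
    intro T hT hG
    by_contra! hS
    have hreach := hT.reachable_induce_of_forall_not_mem hG hpP hqP hpS hqS hS
    have := SimpleGraph.eq_of_reachable_of_existsUnique_rep hrep hp hq hreach
    exact hpq (congrArg (·.1.1) this)
  exact ⟨fun _ => hit _ isSpanFamily_upTriInt fun _ _ => theta6_adj_of_emptyUp,
    fun _ => hit _ isSpanFamily_downTriInt fun _ _ => theta6_adj_of_emptyDown⟩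

/-- If `RC ⊆ P \ S` contains exactly one point from each connected component of the
subgraph of `G⋆(P)` induced on `P \ S`, then `S` blocks `G⋆(RC)`. -/
theorem representatives_blocked (P S RC : Finset Pt) (hP : GenPos P) (hS : S ⊆ P)
    (hRC : RC ⊆ P \ S)
    (hrep : ∀ C : ((theta6 P).induce {v : {x // x ∈ P} | v.1 ∉ S}).ConnectedComponent,
      ∃! v : {v : {x // x ∈ P} | v.1 ∉ S},
        v.1.1 ∈ RC ∧
        ((theta6 P).induce {v : {x // x ∈ P} | v.1 ∉ S}).connectedComponentMk v = C) :
    Blocks RC S :=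
  representatives_blocked_general P S RC hRC hrep
end
end

section
/- There are infinitely many n for which there exists a set P of n points in the plane in general position such that every strong matching in the Θ6-graph G⋆(P) has at most 2n/5 edges; in particular, μ*(n) ≤ 2n/5 for infinitely many n. -/
noncomputable section

/-!
In the cone coordinates `B = √3 x + y`, `C = -√3 x + y` (height `(B + C) / 2`) every triangle
`△(p,q)` or `▽(p,q)` is cut out by three coordinate inequalities. Take `k` clusters, translated
copies of a five-point gadget, each far to the right of and slightly above the previous one.
Charge an up-triangle to the higher cluster of its endpoints and a down-triangle to the lower one.
Seen from the cluster it is charged to, a triangle either joins two gadget points, or (coming from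
another cluster) contains a fixed up-box or down-box near the gadget. A finite check on the gadget
shows that no three pairwise disjoint such shapes exist, so a strong matching of the `5k` points
has at most `2k` triangles.
-/

namespace Theta6

open Finset Function

/-- A closed triangle in cone coordinates `(B, C)` on the integer lattice; the first bound is on
`B + C`, i.e. on twice the height. -/
inductive ConeTri
  | up (sum b c : ℤ)
  | down (sum b c : ℤ)

namespace ConeTri

def carrier : ConeTri → Set (ℤ × ℤ)
  | up s b c => {p | s ≤ p.1 + p.2 ∧ p.1 ≤ b ∧ p.2 ≤ c}
  | down s b c => {p | p.1 + p.2 ≤ s ∧ b ≤ p.1 ∧ c ≤ p.2}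

/-- The integer condition for two triangles to meet; being decidable, it lets `decide` check
facts about the gadget. -/
def Meets : ConeTri → ConeTri → Prop
  | up s b c, up s' b' c' => max s s' ≤ min b b' + min c c'
  | down s b c, down s' b' c' => max b b' + max c c' ≤ min s s'
  | up s b c, down s' b' c' => b' ≤ b ∧ c' ≤ c ∧ s ≤ s' ∧ s ≤ b + c ∧ b' + c' ≤ s'
  | down s b c, up s' b' c' => b ≤ b' ∧ c ≤ c' ∧ s' ≤ s ∧ s' ≤ b' + c' ∧ b + c ≤ s

instance : DecidableRel Meets
  | up .., up .. | down .., down .. | up .., down .. | down .., up .. => by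
    unfold Meets; infer_instance

lemma up_meets_down_nonempty {s b c s' b' c' : ℤ} (h : (up s b c).Meets (down s' b' c')) :
    ((up s b c).carrier ∩ (down s' b' c').carrier).Nonempty := by
  obtain ⟨hb, hc, hs, hs₁, hs₂⟩ := h
  -- fix `B + C = m` as low as both triangles allow, then `B` as low as possible
  let m := max s (b' + c')
  refine ⟨(max b' (m - c), m - max b' (m - c)), ?_, ?_⟩ <;>
    simp only [carrier, Set.mem_ofPred_eq] <;> omega

theorem Meets.inter_nonempty {T T' : ConeTri} (h : T.Meets T') :
    (T.carrier ∩ T'.carrier).Nonempty := by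
  cases T with
  | up s b c => cases T' with
    | up s' b' c' =>
      refine ⟨(min b b', max s s' - min b b'), ?_, ?_⟩ <;>
        simp only [Meets, carrier, Set.mem_ofPred_eq] at h ⊢ <;> omega
    | down s' b' c' => exact up_meets_down_nonempty h
  | down s b c => cases T' with
    | up s' b' c' => exact Set.inter_comm _ _ ▸ up_meets_down_nonempty h
    | down s' b' c' =>
      refine ⟨(max b b', min s s' - max b b'), ?_, ?_⟩ <;>
        simp only [Meets, carrier, Set.mem_ofPred_eq] at h ⊢ <;> omega

lemma not_disjoint_of_meets {T T' : ConeTri} (h : T.Meets T') {X Y : Set (ℤ × ℤ)}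
    (hX : T.carrier ⊆ X) (hY : T'.carrier ⊆ Y) : ¬Disjoint X Y := fun hXY =>
  let ⟨_, hp, hp'⟩ := h.inter_nonempty
  Set.disjoint_left.1 hXY (hX hp) (hY hp')

def hull : Bool → ℤ × ℤ → ℤ × ℤ → ConeTri
  | true, p, q => up (min (p.1 + p.2) (q.1 + q.2)) (max p.1 q.1) (max p.2 q.2)
  | false, p, q => down (max (p.1 + p.2) (q.1 + q.2)) (min p.1 q.1) (min p.2 q.2)

lemma left_mem_hull (o : Bool) (p q : ℤ × ℤ) : p ∈ (hull o p q).carrier := by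
  cases o <;> simp only [hull, carrier, Set.mem_ofPred_eq] <;> omega

lemma right_mem_hull (o : Bool) (p q : ℤ × ℤ) : q ∈ (hull o p q).carrier := by
  cases o <;> simp only [hull, carrier, Set.mem_ofPred_eq] <;> omega

lemma add_mem_hull_add {o : Bool} {x p q v : ℤ × ℤ} :
    x + v ∈ (hull o (p + v) (q + v)).carrier ↔ x ∈ (hull o p q).carrier := by
  cases o <;> simp only [hull, carrier, Set.mem_ofPred_eq, Prod.fst_add, Prod.snd_add] <;> omega

end ConeTri

open ConeTri

def ofCone (p : ℤ × ℤ) : Pt := ((p.1 - p.2) / (2 * √3), (p.1 + p.2) / 2)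

@[simp] lemma cA_ofCone (p : ℤ × ℤ) : cA (ofCone p) = ((p.1 + p.2 : ℤ) : ℝ) / 2 := by
  simp [cA, ofCone]

@[simp] lemma cB_ofCone (p : ℤ × ℤ) : cB (ofCone p) = p.1 := by
  simp only [cB, ofCone]; field_simp; ring

@[simp] lemma cC_ofCone (p : ℤ × ℤ) : cC (ofCone p) = p.2 := by
  simp only [cC, ofCone]; field_simp; ring

lemma ofCone_injective : Injective ofCone := fun p q h =>
  Prod.ext (by simpa using congrArg cB h) (by simpa using congrArg cC h)

lemma ofCone_mem_triCl {x p q : ℤ × ℤ} {o : Bool} :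
    ofCone x ∈ triCl (ofCone p, ofCone q, o) ↔ x ∈ (hull o p q).carrier := by
  have h2 : (0 : ℝ) < 2 := two_pos
  cases o <;>
  simp only [triCl, upTri, downTri, hull, carrier, Set.mem_ofPred_eq, cA_ofCone, cB_ofCone,
    cC_ofCone, Bool.false_eq_true, if_false, if_true, min_div_div_right h2.le,
    max_div_div_right h2.le, div_le_div_iff_of_pos_right h2] <;> norm_cast

lemma genPos_of_cone {P : Finset Pt}
    (h : ∀ p ∈ P, ∀ q ∈ P, p ≠ q → cA p ≠ cA q ∧ cB p ≠ cB q ∧ cC p ≠ cC q) :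
    GenPos P := by
  intro p hp q hq hpq
  obtain ⟨hA, hB, hC⟩ := h p hp q hq hpq
  refine ⟨hA, fun h' => hC ?_, fun h' => hB ?_⟩ <;>
  · simp only [cB, cC]; linear_combination -h'

/-- In cone coordinates `(B, C)`. -/
def gadget : Fin 5 → ℤ × ℤ := ![(9, 7), (5, 1), (13, -1), (7, -7), (8, 0)]

/-- Contained, in the coordinates of cluster `i`, in every up-triangle from a lower cluster to
cluster `i`. -/
def upBox : ConeTri := up 0 5 7

/-- Contained, in the coordinates of cluster `i`, in every down-triangle from cluster `i` to a
higher cluster. -/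
def downBox : ConeTri := down 16 13 (-7)

def IsIntra (X : Set (ℤ × ℤ)) : Prop :=
  ∃ o s s', s ≠ s' ∧ (hull o (gadget s) (gadget s')).carrier ⊆ X

/-- The shapes a triangle charged to a cluster takes in the coordinates of that cluster. -/
def IsPiece (X : Set (ℤ × ℤ)) : Prop :=
  IsIntra X ∨ upBox.carrier ⊆ X ∨ downBox.carrier ⊆ X

lemma gadget_hull_meets_box : ∀ s s' : Fin 5, ∀ o : Bool, s ≠ s' →
    (hull o (gadget s) (gadget s')).Meets upBox ∨
      (hull o (gadget s) (gadget s')).Meets downBox := by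
  decide

def BlocksHullPairs (B : ConeTri) : Prop :=
  ∀ s₁ s₂ s₃ s₄ : Fin 5, ∀ o o' : Bool, s₁ ≠ s₂ → s₃ ≠ s₄ →
    (hull o (gadget s₁) (gadget s₂)).Meets (hull o' (gadget s₃) (gadget s₄)) ∨
      (hull o (gadget s₁) (gadget s₂)).Meets B ∨ (hull o' (gadget s₃) (gadget s₄)).Meets B

lemma blocksHullPairs_upBox : BlocksHullPairs upBox := by
  unfold BlocksHullPairs; decide

lemma blocksHullPairs_downBox : BlocksHullPairs downBox := by
  unfold BlocksHullPairs; decide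

lemma IsIntra.not_disjoint_boxes {X Y Z : Set (ℤ × ℤ)} (hX : IsIntra X)
    (hY : upBox.carrier ⊆ Y) (hZ : downBox.carrier ⊆ Z) (hXY : Disjoint X Y) :
    ¬Disjoint X Z := by
  obtain ⟨o, s, s', hss, hX⟩ := hX
  rcases gadget_hull_meets_box s s' o hss with h | h
  · exact absurd hXY (not_disjoint_of_meets h hX hY)
  · exact not_disjoint_of_meets h hX hZ

lemma IsIntra.not_disjoint_box {B : ConeTri} (hB : BlocksHullPairs B)
    {X Y Z : Set (ℤ × ℤ)} (hX : IsIntra X) (hY : IsIntra Y) (hZ : B.carrier ⊆ Z)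
    (hXY : Disjoint X Y) (hXZ : Disjoint X Z) : ¬Disjoint Y Z := by
  obtain ⟨o, s₁, s₂, h₁₂, hX⟩ := hX
  obtain ⟨o', s₃, s₄, h₃₄, hY⟩ := hY
  rcases hB s₁ s₂ s₃ s₄ o o' h₁₂ h₃₄ with h | h | h
  · exact absurd hXY (not_disjoint_of_meets h hX hY)
  · exact absurd hXZ (not_disjoint_of_meets h hX hZ)
  · exact not_disjoint_of_meets h hY hZ

section Counting

variable {ι : Type*} {F : Finset ι} {Y : ι → Set (ℤ × ℤ)}

lemma card_le_one_of_box_subset {B : ConeTri} (hB : B.Meets B)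
    (hF : ∀ x ∈ F, B.carrier ⊆ Y x) (hY : (F : Set ι).Pairwise (Disjoint on Y)) : #F ≤ 1 :=
  card_le_one.2 fun x hx y hy => by_contra fun hxy =>
    not_disjoint_of_meets hB (hF x hx) (hF y hy) (hY hx hy hxy)

lemma two_mul_card_le_five_of_isIntra (hF : ∀ x ∈ F, IsIntra (Y x))
    (hY : (F : Set ι).Pairwise (Disjoint on Y)) : 2 * #F ≤ 5 := by
  classical
  let E (x : ι) : Finset (Fin 5) := {s | gadget s ∈ Y x}
  have hE : ∀ x ∈ F, 2 ≤ #(E x) := fun x hx => by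
    obtain ⟨o, s, s', hss, hX⟩ := hF x hx
    calc 2 = #{s, s'} := (card_pair hss).symm
      _ ≤ #(E x) := card_le_card fun r hr => by
        rcases mem_insert.1 hr with rfl | hr
        · exact mem_filter.2 ⟨mem_univ _, hX (left_mem_hull o _ _)⟩
        · exact mem_filter.2 ⟨mem_univ _, mem_singleton.1 hr ▸ hX (right_mem_hull o _ _)⟩
  have hdisj : (F : Set ι).PairwiseDisjoint E := fun x hx y hy hxy =>
    disjoint_left.2 fun s hsx hsy =>
      Set.disjoint_left.1 (hY hx hy hxy) (mem_filter.1 hsx).2 (mem_filter.1 hsy).2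
  calc 2 * #F = #F • 2 := mul_comm _ _
    _ ≤ ∑ x ∈ F, #(E x) := card_nsmul_le_sum _ _ _ hE
    _ = #(F.biUnion E) := (card_biUnion hdisj).symm
    _ ≤ 5 := card_le_univ _

theorem card_le_two_of_isPiece (hF : ∀ x ∈ F, IsPiece (Y x))
    (hY : (F : Set ι).Pairwise (Disjoint on Y)) : #F ≤ 2 := by
  classical
  let I := {x ∈ F | IsIntra (Y x)}
  let U := {x ∈ F | ¬IsIntra (Y x) ∧ upBox.carrier ⊆ Y x}
  let D := {x ∈ F | ¬IsIntra (Y x) ∧ downBox.carrier ⊆ Y x}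
  have hcover : F ⊆ I ∪ U ∪ D := fun x hx => by
    by_cases h : IsIntra (Y x)
    · simp [I, hx, h]
    · rcases (hF x hx).resolve_left h with h' | h' <;> simp [U, D, hx, h, h']
  have hI : 2 * #I ≤ 5 :=
    two_mul_card_le_five_of_isIntra (fun x hx => (mem_filter.1 hx).2) (hY.mono (filter_subset _ _))
  have hU : #U ≤ 1 := card_le_one_of_box_subset (by decide) (fun x hx => (mem_filter.1 hx).2.2)
    (hY.mono (filter_subset _ _))
  have hD : #D ≤ 1 := card_le_one_of_box_subset (by decide) (fun x hx => (mem_filter.1 hx).2.2)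
    (hY.mono (filter_subset _ _))
  have hIU : 2 ≤ #I → #U = 0 := fun h2 =>
    card_eq_zero.2 <| eq_empty_of_forall_notMem fun z hz => by
      obtain ⟨x, hx, y, hy, hxy⟩ := one_lt_card.1 h2
      simp only [I, U, mem_filter] at hx hy hz
      exact hx.2.not_disjoint_box blocksHullPairs_upBox hy.2 hz.2.2 (hY hx.1 hy.1 hxy)
        (hY hx.1 hz.1 fun h => hz.2.1 (h ▸ hx.2)) (hY hy.1 hz.1 fun h => hz.2.1 (h ▸ hy.2))
  have hID : 2 ≤ #I → #D = 0 := fun h2 =>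
    card_eq_zero.2 <| eq_empty_of_forall_notMem fun z hz => by
      obtain ⟨x, hx, y, hy, hxy⟩ := one_lt_card.1 h2
      simp only [I, D, mem_filter] at hx hy hz
      exact hx.2.not_disjoint_box blocksHullPairs_downBox hy.2 hz.2.2 (hY hx.1 hy.1 hxy)
        (hY hx.1 hz.1 fun h => hz.2.1 (h ▸ hx.2)) (hY hy.1 hz.1 fun h => hz.2.1 (h ▸ hy.2))
  have hIUD : 1 ≤ #I → #U = 0 ∨ #D = 0 := fun h1 => by
    by_contra! h
    obtain ⟨⟨x, hx⟩, ⟨y, hy⟩, ⟨z, hz⟩⟩ :=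
      And.intro (card_pos.1 h1) (And.intro (card_pos.1 h.1.bot_lt) (card_pos.1 h.2.bot_lt))
    simp only [I, U, D, mem_filter] at hx hy hz
    exact hx.2.not_disjoint_boxes hy.2.2 hz.2.2 (hY hx.1 hy.1 fun h => hy.2.1 (h ▸ hx.2))
      (hY hx.1 hz.1 fun h => hz.2.1 (h ▸ hx.2))
  have := (card_le_card hcover).trans (card_union_le _ _)
  have := card_union_le I U
  omega

end Counting

/-- Each step exceeds the gadget's spread in `B`, in `C` and in `B + C`, so distinct points differ
in all three cone coordinates. -/
def shift (i : ℕ) : ℤ × ℤ := (60 * i, -20 * i)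

def node (i : ℕ) (s : Fin 5) : ℤ × ℤ := gadget s + shift i

def pointSet (k : ℕ) : Finset Pt := (range k ×ˢ univ).image fun a => ofCone (node a.1 a.2)

lemma gadget_bounds : ∀ s : Fin 5, 5 ≤ (gadget s).1 ∧ (gadget s).1 ≤ 13 ∧
    -7 ≤ (gadget s).2 ∧ (gadget s).2 ≤ 7 ∧
    0 ≤ (gadget s).1 + (gadget s).2 ∧ (gadget s).1 + (gadget s).2 ≤ 16 := by
  decide

lemma eq_of_gadget_coord_eq : ∀ s s' : Fin 5, (gadget s).1 = (gadget s').1 ∨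
    (gadget s).2 = (gadget s').2 ∨
    (gadget s).1 + (gadget s).2 = (gadget s').1 + (gadget s').2 → s = s' := by
  decide

lemma eq_of_node_coord_eq {i j : ℕ} {s s' : Fin 5} (h : (node i s).1 = (node j s').1 ∨
    (node i s).2 = (node j s').2 ∨ (node i s).1 + (node i s).2 = (node j s').1 + (node j s').2) :
    i = j ∧ s = s' := by
  have := gadget_bounds s
  have := gadget_bounds s'
  simp only [node, shift, Prod.fst_add, Prod.snd_add] at h
  obtain rfl : i = j := by omega
  exact ⟨rfl, eq_of_gadget_coord_eq s s' (by omega)⟩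

lemma mem_pointSet {k : ℕ} {x : Pt} :
    x ∈ pointSet k ↔ ∃ i < k, ∃ s, ofCone (node i s) = x := by
  simp [pointSet]

lemma card_pointSet (k : ℕ) : #(pointSet k) = 5 * k := by
  rw [pointSet, card_image_of_injective, card_product, card_range, card_univ, Fintype.card_fin,
    mul_comm]
  rintro ⟨i, s⟩ ⟨j, s'⟩ h
  obtain ⟨rfl, rfl⟩ := eq_of_node_coord_eq (.inl (congrArg Prod.fst (ofCone_injective h)))
  rfl

lemma genPos_pointSet (k : ℕ) : GenPos (pointSet k) := by
  refine genPos_of_cone ?_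
  simp only [mem_pointSet]
  rintro _ ⟨i, -, s, rfl⟩ _ ⟨j, -, s', rfl⟩ hne
  have key : ¬(i = j ∧ s = s') := fun ⟨hi, hs⟩ => hne (by rw [hi, hs])
  refine ⟨fun h => key (eq_of_node_coord_eq (.inr (.inr ?_))),
    fun h => key (eq_of_node_coord_eq (.inl ?_)),
    fun h => key (eq_of_node_coord_eq (.inr (.inl ?_)))⟩
  all_goals simp at h; exact_mod_cast h

def clusterPt (i : ℕ) (x : ℤ × ℤ) : Pt := ofCone (x + shift i)

def clusterIdx (x : Pt) : ℕ := ⌊cB x / 60⌋₊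

lemma clusterIdx_node (i : ℕ) (s : Fin 5) : clusterIdx (ofCone (node i s)) = i := by
  have := gadget_bounds s
  have h₁ : (5 : ℝ) ≤ (gadget s).1 := by exact_mod_cast this.1
  have h₂ : ((gadget s).1 : ℝ) ≤ 13 := by exact_mod_cast this.2.1
  rw [clusterIdx, cB_ofCone, Nat.floor_eq_iff (by simp [node, shift]; positivity)]
  simp only [node, shift, Prod.fst_add, Int.cast_add, Int.cast_mul, Int.cast_ofNat,
    Int.cast_natCast]
  constructor
  · rw [le_div_iff₀ (by norm_num)]; linarith
  · rw [div_lt_iff₀ (by norm_num)]; linarith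

def charge (t : Pt × Pt × Bool) : ℕ :=
  if t.2.2 then max (clusterIdx t.1) (clusterIdx t.2.1) else min (clusterIdx t.1) (clusterIdx t.2.1)

lemma triCl_swap (p q : Pt) (o : Bool) : triCl (p, q, o) = triCl (q, p, o) := by
  cases o <;> simp only [triCl, upTri, downTri, min_comm, max_comm]

lemma charge_swap (p q : Pt) (o : Bool) : charge (p, q, o) = charge (q, p, o) := by
  simp only [charge, min_comm, max_comm]

lemma upBox_subset_preimage_triCl {i j : ℕ} (hij : i < j) (s s' : Fin 5) :
    upBox.carrier ⊆ clusterPt j ⁻¹' triCl (ofCone (node i s), ofCone (node j s'), true) := by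
  intro x hx
  have := gadget_bounds s
  have := gadget_bounds s'
  simp only [Set.mem_preimage, clusterPt, ofCone_mem_triCl]
  simp only [upBox, hull, carrier, node, shift, Set.mem_ofPred_eq, Prod.fst_add,
    Prod.snd_add] at hx ⊢
  omega

lemma downBox_subset_preimage_triCl {i j : ℕ} (hij : i < j) (s s' : Fin 5) :
    downBox.carrier ⊆
      clusterPt i ⁻¹' triCl (ofCone (node i s), ofCone (node j s'), false) := by
  intro x hx
  have := gadget_bounds s
  have := gadget_bounds s'
  simp only [Set.mem_preimage, clusterPt, ofCone_mem_triCl]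
  simp only [downBox, hull, carrier, node, shift, Set.mem_ofPred_eq, Prod.fst_add,
    Prod.snd_add] at hx ⊢
  omega

lemma isPiece_of_lt {i j : ℕ} (hij : i < j) (s s' : Fin 5) (o : Bool) :
    IsPiece (clusterPt (charge (ofCone (node i s), ofCone (node j s'), o)) ⁻¹'
      triCl (ofCone (node i s), ofCone (node j s'), o)) := by
  cases o
  · rw [charge, if_neg Bool.false_ne_true, clusterIdx_node, clusterIdx_node, min_eq_left hij.le]
    exact .inr (.inr (downBox_subset_preimage_triCl hij s s'))
  · rw [charge, if_pos rfl, clusterIdx_node, clusterIdx_node, max_eq_right hij.le]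
    exact .inr (.inl (upBox_subset_preimage_triCl hij s s'))

lemma isPiece_of_mem {k : ℕ} {p q : Pt} (hp : p ∈ pointSet k) (hq : q ∈ pointSet k)
    (hpq : p ≠ q) (o : Bool) : IsPiece (clusterPt (charge (p, q, o)) ⁻¹' triCl (p, q, o)) := by
  obtain ⟨i, -, s, rfl⟩ := mem_pointSet.1 hp
  obtain ⟨j, -, s', rfl⟩ := mem_pointSet.1 hq
  rcases lt_trichotomy i j with hij | rfl | hij
  · exact isPiece_of_lt hij s s' o
  · have hc : charge (ofCone (node i s), ofCone (node i s'), o) = i := by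
      cases o <;> simp [charge, clusterIdx_node]
    rw [hc]
    exact .inl ⟨o, s, s', fun h => hpq (by rw [h]), fun x hx =>
      ofCone_mem_triCl.2 (add_mem_hull_add.2 hx)⟩
  · rw [triCl_swap, charge_swap]
    exact isPiece_of_lt hij s' s o

lemma charge_lt {k : ℕ} {t : Pt × Pt × Bool} (h₁ : t.1 ∈ pointSet k)
    (h₂ : t.2.1 ∈ pointSet k) : charge t < k := by
  obtain ⟨i, hi, s, hs⟩ := mem_pointSet.1 h₁
  obtain ⟨j, hj, s', hs'⟩ := mem_pointSet.1 h₂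
  unfold charge
  rw [← hs, ← hs', clusterIdx_node, clusterIdx_node]
  split <;> omega

theorem card_le_two_mul {k : ℕ} {T : Finset (Pt × Pt × Bool)}
    (hT : ∀ t ∈ T, t.1 ∈ pointSet k ∧ t.2.1 ∈ pointSet k ∧ t.1 ≠ t.2.1)
    (hdisj : (T : Set (Pt × Pt × Bool)).Pairwise fun t t' => Disjoint (triCl t) (triCl t')) :
    #T ≤ 2 * k := by
  have hmaps : ∀ t ∈ T, charge t ∈ range k := fun t ht =>
    mem_range.2 (charge_lt (hT t ht).1 (hT t ht).2.1)
  simpa using card_le_mul_card_image_of_maps_to hmaps 2 fun i _ =>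
    card_le_two_of_isPiece (Y := fun t => clusterPt i ⁻¹' triCl t)
      (fun t ht => by
        obtain ⟨htT, rfl⟩ := mem_filter.1 ht
        obtain ⟨h₁, h₂, hne⟩ := hT t htT
        exact isPiece_of_mem h₁ h₂ hne t.2.2)
      fun t ht t' ht' htt' => (hdisj (mem_filter.1 ht).1 (mem_filter.1 ht').1 htt').preimage _

end Theta6

/-- There are infinitely many `n` for which some set `P` of `n` points in general
position has strong matchings of size at most `2n/5` only: every family of pairwise
disjoint (closed) empty triangles, each introducing an edge of `G⋆(P)`, has at most
`2n/5` members. -/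
theorem strong_matching_upper_bound :
    ∀ N : ℕ, ∃ n, N ≤ n ∧ ∃ P : Finset Pt, P.card = n ∧ GenPos P ∧
      ∀ T : Finset (Pt × Pt × Bool),
        (∀ t ∈ T, IsEmptyTriOf P t) →
        ((T : Set (Pt × Pt × Bool)).Pairwise fun t t' => Disjoint (triCl t) (triCl t')) →
        (T.card : ℝ) ≤ 2 * (n : ℝ) / 5 := by
  intro N
  refine ⟨5 * N, by omega, Theta6.pointSet N, Theta6.card_pointSet N, Theta6.genPos_pointSet N,
    fun T hT hdisj => ?_⟩
  have := Theta6.card_le_two_mul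
    (fun t ht => ⟨(hT t ht).1, (hT t ht).2.1, (hT t ht).2.2.1⟩) hdisj
  rw [le_div_iff₀ (by norm_num)]
  exact_mod_cast (by omega : T.card * 5 ≤ 2 * (5 * N))
end
end

section
/- Every Θ6-graph on a set P of n ≥ 3 points in the plane in general position has at most 5n − 12 edges. -/
noncomputable section

/-! Around each point, the lines of slopes 0° and ±60° through it cut the plane into six
cones. An edge `pq` whose upward triangle `△(p,q)` is empty joins one endpoint to its nearest
neighbour in one of the three cones whose truncations are upward triangles, and likewise for
`▽(p,q)` and the other three cones. So the edges with an empty upward triangle plus those with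
an empty downward triangle number at most the nonempty cones, summed over all points.

At least `13` of the `6n` cones are empty once `n ≥ 6`: the three highest points have at
least `3 + 2 + 1` empty cones above them, the three lowest likewise below, and the point
maximising `√3 x + y` has two empty cones above and one below, one more than counted. The
edges with both triangles empty form a connected graph, since a point inside either triangle
of `p, q` is strictly closer to both `p` and `q` in the hexagonal distance; so there are at
least `n - 1` of them, and `|E| ≤ 6n - 13 - (n - 1) = 5n - 12`. For `n ≤ 5`,
`n.choose 2 ≤ 5n - 12`. -/

section GeneralPosition

variable {P : Finset Pt} {p q : Pt}

lemma GenPos.cA_ne (hP : GenPos P) (hp : p ∈ P) (hq : q ∈ P) (hpq : p ≠ q) : cA p ≠ cA q :=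
  (hP p hp q hq hpq).1

lemma GenPos.cB_ne (hP : GenPos P) (hp : p ∈ P) (hq : q ∈ P) (hpq : p ≠ q) : cB p ≠ cB q :=
  fun h => (hP p hp q hq hpq).2.2 (by simp only [cB] at h; linarith)

lemma GenPos.cC_ne (hP : GenPos P) (hp : p ∈ P) (hq : q ∈ P) (hpq : p ≠ q) : cC p ≠ cC q :=
  fun h => (hP p hp q hq hpq).2.1 (by simp only [cC] at h; linarith)

end GeneralPosition

namespace Finset

lemma exists_mem_sdiff_card_filter_lt_le {α β : Type*} [DecidableEq α] [LinearOrder β]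
    (f : α → β) {s t : Finset α} (h : #t < #s) :
    ∃ x ∈ s \ t, #{y ∈ s | f x < f y} ≤ #t := by
  have hne : (s \ t).Nonempty := by
    rw [← card_pos]; have := card_le_card_sdiff_add_card (s := s) (t := t); omega
  obtain ⟨x, hx, hmax⟩ := (s \ t).exists_max_image f hne
  refine ⟨x, hx, card_le_card fun y hy => ?_⟩
  rw [mem_filter] at hy
  by_contra hyt
  exact (hmax y (mem_sdiff.2 ⟨hy.1, hyt⟩)).not_gt hy.2

lemma six_le_sum_tsub_card_filter_lt {α β : Type*} [DecidableEq α] [LinearOrder β]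
    (f : α → β) {s : Finset α} (hs : 3 ≤ #s) :
    6 ≤ ∑ x ∈ s, (3 - #{y ∈ s | f x < f y}) := by
  obtain ⟨x₁, hx₁, h₁⟩ :=
    exists_mem_sdiff_card_filter_lt_le f (s := s) (t := ∅) (by rw [card_empty]; omega)
  obtain ⟨x₂, hx₂, h₂⟩ :=
    exists_mem_sdiff_card_filter_lt_le f (s := s) (t := {x₁}) (by rw [card_singleton]; omega)
  obtain ⟨x₃, hx₃, h₃⟩ := exists_mem_sdiff_card_filter_lt_le f (s := s) (t := {x₂, x₁})
    (lt_of_le_of_lt card_le_two (by omega))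
  simp only [mem_sdiff, mem_insert, mem_singleton, not_or] at hx₁ hx₂ hx₃
  have hsub : {x₃, x₂, x₁} ⊆ s := by
    simp only [insert_subset_iff, singleton_subset_iff]; exact ⟨hx₃.1, hx₂.1, hx₁.1⟩
  refine le_trans ?_ (sum_le_sum_of_subset hsub)
  rw [sum_insert (by simp [hx₃.2]), sum_pair hx₂.2]
  have := card_le_two (a := x₂) (b := x₁)
  simp only [card_empty, card_singleton] at h₁ h₂
  omega

end Finset

lemma SimpleGraph.ncard_edgeSet_le_card_choose_two {V : Type*} [Fintype V] (G : SimpleGraph V) :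
    G.edgeSet.ncard ≤ (Fintype.card V).choose 2 := by
  classical
  rw [← G.coe_edgeFinset, Set.ncard_coe_finset]
  exact G.card_edgeFinset_le_card_choose_two

namespace Theta6

open Finset
open scoped Classical

variable {P : Finset Pt} {p q r v w : Pt}

lemma cB_add_cC (z : Pt) : cB z + cC z = 2 * cA z := by
  simp only [cA, cB, cC]; ring

/-- The six open cones at `v`: `0` points up, `3` down, `1`, `2` are the upper right and
left cones, `4`, `5` the lower right and left ones. -/
def Cone : Fin 6 → Pt → Pt → Prop
  | 0, v, r => cB v < cB r ∧ cC v < cC r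
  | 1, v, r => cA v < cA r ∧ cC r < cC v
  | 2, v, r => cA v < cA r ∧ cB r < cB v
  | 3, v, r => cB r < cB v ∧ cC r < cC v
  | 4, v, r => cA r < cA v ∧ cB v < cB r
  | 5, v, r => cA r < cA v ∧ cC v < cC r

/-- Cutting cone `k` at `v` by the line of the third direction through `r` leaves an
equilateral triangle with corner `v`; `coneKey k r` decreases as that triangle grows. -/
def coneKey : Fin 6 → Pt → ℝ
  | 0, z => -cA z
  | 1, z => -cB z
  | 2, z => -cC z
  | 3, z => cA z
  | 4, z => cC z
  | 5, z => cB z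

/-- `v` is a corner of `△(v, w)` when `w` lies in one of these cones of `v`, and a corner of
`▽(v, w)` otherwise. -/
def upCones : Finset (Fin 6) := {1, 2, 3}

def aboveCones : Finset (Fin 6) := {0, 1, 2}

def IsConeNbr (P : Finset Pt) (k : Fin 6) (v w : Pt) : Prop :=
  w ∈ P ∧ Cone k v w ∧ ∀ r ∈ P, Cone k v r → coneKey k r ≤ coneKey k w

def IsEmptyCone (P : Finset Pt) (k : Fin 6) (v : Pt) : Prop :=
  ∀ r ∈ P, ¬ Cone k v r

lemma Cone.eq {k k' : Fin 6} (h : Cone k v r) (h' : Cone k' v r) : k = k' := by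
  have := cB_add_cC v; have := cB_add_cC r
  fin_cases k <;> fin_cases k' <;> simp only [Cone] at h h' <;>
    first | rfl | (exfalso; linarith [h.1, h.2, h'.1, h'.2])

lemma Cone.cA_lt {k : Fin 6} (hk : k ∈ aboveCones) (h : Cone k v r) : cA v < cA r := by
  have := cB_add_cC v; have := cB_add_cC r
  fin_cases k <;> simp only [aboveCones, Cone] at hk h <;> first | linarith [h.1, h.2] | simp at hk

lemma Cone.lt_cA {k : Fin 6} (hk : k ∉ aboveCones) (h : Cone k v r) : cA r < cA v := by
  have := cB_add_cC v; have := cB_add_cC r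
  fin_cases k <;> simp only [aboveCones, Cone] at hk h <;> first | linarith [h.1, h.2] | simp at hk

lemma injOn_coneKey (hP : GenPos P) (k : Fin 6) : Set.InjOn (coneKey k) P := by
  intro p hp q hq h
  by_contra hpq
  fin_cases k <;> simp only [coneKey, neg_inj] at h
  exacts [hP.cA_ne hp hq hpq h, hP.cB_ne hp hq hpq h, hP.cC_ne hp hq hpq h,
    hP.cA_ne hp hq hpq h, hP.cC_ne hp hq hpq h, hP.cB_ne hp hq hpq h]

lemma IsConeNbr.unique (hP : GenPos P) {k : Fin 6} {w' : Pt} (h : IsConeNbr P k v w)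
    (h' : IsConeNbr P k v w') : w = w' :=
  injOn_coneKey hP k h.1 h'.1 (le_antisymm (h'.2.2 w h.1 h.2.1) (h.2.2 w' h'.1 h'.2.1))

lemma IsConeNbr.not_isEmptyCone {k : Fin 6} (h : IsConeNbr P k v w) : ¬ IsEmptyCone P k v :=
  fun hempty => hempty w h.1 h.2.1

lemma exists_isConeNbr_of_emptyUp (hP : GenPos P) (hp : p ∈ P) (hq : q ∈ P) (hpq : p ≠ q)
    (h : EmptyUp P p q) : ∃ k ∈ upCones, IsConeNbr P k p q ∨ IsConeNbr P k q p := by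
  wlog ha : cA p < cA q generalizing p q
  · have ha' := lt_of_le_of_ne (not_lt.1 ha) (hP.cA_ne hq hp hpq.symm)
    obtain ⟨k, hk, hnbr⟩ := this hq hp hpq.symm (by rwa [EmptyUp, upTriInt_comm]) ha'
    exact ⟨k, hk, hnbr.symm⟩
  have := cB_add_cC p; have := cB_add_cC q
  simp only [EmptyUp, upTriInt, min_eq_left ha.le] at h
  rcases lt_or_gt_of_ne (hP.cB_ne hp hq hpq) with hb | hb <;>
    rcases lt_or_gt_of_ne (hP.cC_ne hp hq hpq) with hc | hc
  · refine ⟨3, by decide, Or.inr ⟨hp, ⟨hb, hc⟩, fun r hr hr' => not_lt.1 fun hlt => ?_⟩⟩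
    exact h r hr ⟨hlt, by simpa [hb.le] using hr'.1, by simpa [hc.le] using hr'.2⟩
  · refine ⟨1, by decide, Or.inl ⟨hq, ⟨ha, hc⟩, fun r hr hr' => not_lt.1 fun hlt => ?_⟩⟩
    exact h r hr ⟨hr'.1, by simpa [hb.le, coneKey] using hlt, by simpa [hc.le] using hr'.2⟩
  · refine ⟨2, by decide, Or.inl ⟨hq, ⟨ha, hb⟩, fun r hr hr' => not_lt.1 fun hlt => ?_⟩⟩
    exact h r hr ⟨hr'.1, by simpa [hb.le] using hr'.2, by simpa [hc.le, coneKey] using hlt⟩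
  · linarith

lemma exists_isConeNbr_of_emptyDown (hP : GenPos P) (hp : p ∈ P) (hq : q ∈ P) (hpq : p ≠ q)
    (h : EmptyDown P p q) : ∃ k ∉ upCones, IsConeNbr P k p q ∨ IsConeNbr P k q p := by
  wlog ha : cA p < cA q generalizing p q
  · have ha' := lt_of_le_of_ne (not_lt.1 ha) (hP.cA_ne hq hp hpq.symm)
    obtain ⟨k, hk, hnbr⟩ := this hq hp hpq.symm (by rwa [EmptyDown, downTriInt_comm]) ha'
    exact ⟨k, hk, hnbr.symm⟩
  have := cB_add_cC p; have := cB_add_cC q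
  simp only [EmptyDown, downTriInt, max_eq_right ha.le] at h
  rcases lt_or_gt_of_ne (hP.cB_ne hp hq hpq) with hb | hb <;>
    rcases lt_or_gt_of_ne (hP.cC_ne hp hq hpq) with hc | hc
  · refine ⟨0, by decide, Or.inl ⟨hq, ⟨hb, hc⟩, fun r hr hr' => not_lt.1 fun hlt => ?_⟩⟩
    exact h r hr ⟨by simpa [coneKey] using hlt, by simpa [hb.le] using hr'.1,
      by simpa [hc.le] using hr'.2⟩
  · refine ⟨5, by decide, Or.inr ⟨hp, ⟨ha, hc⟩, fun r hr hr' => not_lt.1 fun hlt => ?_⟩⟩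
    exact h r hr ⟨hr'.1, by simpa [hb.le, coneKey] using hlt, by simpa [hc.le] using hr'.2⟩
  · refine ⟨4, by decide, Or.inr ⟨hp, ⟨ha, hb⟩, fun r hr hr' => not_lt.1 fun hlt => ?_⟩⟩
    exact h r hr ⟨hr'.1, by simpa [hb.le] using hr'.2, by simpa [hc.le, coneKey] using hlt⟩
  · linarith

def hexDist (p q : Pt) : ℝ :=
  max |2 * (cA p - cA q)| (max |cB p - cB q| |cC p - cC q|)

lemma hexDist_comm (p q : Pt) : hexDist p q = hexDist q p := by
  rw [hexDist, hexDist, abs_sub_comm (cB p), abs_sub_comm (cC p), ← abs_neg, ← mul_neg, neg_sub]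

lemma hexDist_lt_of_mem_upTriInt (hr : r ∈ upTriInt p q) : hexDist p r < hexDist p q := by
  have := cB_add_cC p; have := cB_add_cC q; have := cB_add_cC r
  obtain ⟨h1, h2, h3⟩ := hr
  have hsize : max (cB p) (cB q) + max (cC p) (cC q) - 2 * min (cA p) (cA q) ≤ hexDist p q := by
    unfold hexDist; grind
  refine lt_of_lt_of_le ?_ hsize
  simp only [hexDist, max_lt_iff, abs_lt]
  refine ⟨⟨?_, ?_⟩, ⟨?_, ?_⟩, ⟨?_, ?_⟩⟩ <;>
    linarith [le_max_left (cB p) (cB q), le_max_left (cC p) (cC q), min_le_left (cA p) (cA q)]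

lemma hexDist_lt_of_mem_downTriInt (hr : r ∈ downTriInt p q) : hexDist p r < hexDist p q := by
  have := cB_add_cC p; have := cB_add_cC q; have := cB_add_cC r
  obtain ⟨h1, h2, h3⟩ := hr
  have hsize : 2 * max (cA p) (cA q) - min (cB p) (cB q) - min (cC p) (cC q) ≤ hexDist p q := by
    unfold hexDist; grind
  refine lt_of_lt_of_le ?_ hsize
  simp only [hexDist, max_lt_iff, abs_lt]
  refine ⟨⟨?_, ?_⟩, ⟨?_, ?_⟩, ⟨?_, ?_⟩⟩ <;>
    linarith [min_le_left (cB p) (cB q), min_le_left (cC p) (cC q), le_max_left (cA p) (cA q)]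

def upGraph (P : Finset Pt) : SimpleGraph {x // x ∈ P} where
  Adj p q := p ≠ q ∧ EmptyUp P p q
  symm := ⟨fun _ _ h => ⟨h.1.symm, by rw [EmptyUp, upTriInt_comm]; exact h.2⟩⟩
  loopless := ⟨fun _ h => h.1 rfl⟩

def downGraph (P : Finset Pt) : SimpleGraph {x // x ∈ P} where
  Adj p q := p ≠ q ∧ EmptyDown P p q
  symm := ⟨fun _ _ h => ⟨h.1.symm, by rw [EmptyDown, downTriInt_comm]; exact h.2⟩⟩
  loopless := ⟨fun _ h => h.1 rfl⟩

lemma theta6_eq_sup : theta6 P = upGraph P ⊔ downGraph P := by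
  ext p q
  simp only [theta6, upGraph, downGraph, SimpleGraph.sup_adj, and_or_left]

lemma reachable_upGraph_inf_downGraph (x y : {x // x ∈ P}) :
    (upGraph P ⊓ downGraph P).Reachable x y := by
  suffices ∀ xy : {x // x ∈ P} × {x // x ∈ P}, (upGraph P ⊓ downGraph P).Reachable xy.1 xy.2 from
    this (x, y)
  intro xy
  induction xy using (Finite.wellFounded_of_trans_of_irrefl
    (fun a b : {x // x ∈ P} × {x // x ∈ P} => hexDist a.1 a.2 < hexDist b.1 b.2)).induction with
  | _ xy ih =>
  obtain ⟨x, y⟩ := xy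
  by_cases hxy : x = y
  · exact hxy ▸ .refl x
  by_cases hempty : EmptyUp P x y ∧ EmptyDown P x y
  · exact SimpleGraph.Adj.reachable ⟨⟨hxy, hempty.1⟩, hxy, hempty.2⟩
  obtain ⟨r, hr, hxr, hry⟩ : ∃ r ∈ P, hexDist x r < hexDist x y ∧ hexDist r y < hexDist x y := by
    simp only [EmptyUp, EmptyDown, not_and_or, not_forall, not_not] at hempty
    rcases hempty with ⟨r, hr, hin⟩ | ⟨r, hr, hin⟩
    · refine ⟨r, hr, hexDist_lt_of_mem_upTriInt hin, ?_⟩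
      rw [upTriInt_comm] at hin
      simpa only [hexDist_comm y] using hexDist_lt_of_mem_upTriInt hin
    · refine ⟨r, hr, hexDist_lt_of_mem_downTriInt hin, ?_⟩
      rw [downTriInt_comm] at hin
      simpa only [hexDist_comm y] using hexDist_lt_of_mem_downTriInt hin
  exact (ih (x, ⟨r, hr⟩) hxr).trans (ih (⟨r, hr⟩, y) hry)

lemma card_le_ncard_edgeSet_inf_add_one (hP : P.Nonempty) :
    #P ≤ (upGraph P ⊓ downGraph P).edgeSet.ncard + 1 := by
  have : Nonempty {x // x ∈ P} := hP.coe_sort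
  have hconn : (upGraph P ⊓ downGraph P).Connected :=
    ⟨reachable_upGraph_inf_downGraph⟩
  have := hconn.card_vert_le_card_edgeSet_add_one
  rwa [Nat.card_coe_set_eq, Nat.card_eq_fintype_card, Fintype.card_coe] at this

lemma ncard_edgeSet_le_card_not_isEmptyCone (hP : GenPos P) (G : SimpleGraph {x // x ∈ P})
    (K : Finset (Fin 6))
    (hG : ∀ p q, G.Adj p q → ∃ k ∈ K, IsConeNbr P k p q ∨ IsConeNbr P k q p) :
    G.edgeSet.ncard ≤ #{s : {x // x ∈ P} × Fin 6 | ¬ IsEmptyCone P s.2 s.1 ∧ s.2 ∈ K} := by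
  rw [Set.ncard_eq_toFinset_card']
  refine card_le_card_of_forall_subsingleton
    (fun e s => ∃ w : {x // x ∈ P}, IsConeNbr P s.2 s.1 w ∧ e = s(s.1, w)) ?_ ?_
  · intro e he
    induction e using Sym2.ind with
    | _ p q =>
    rw [Set.mem_toFinset, SimpleGraph.mem_edgeSet] at he
    obtain ⟨k, hk, hpq | hqp⟩ := hG p q he
    · exact ⟨(p, k), by simp [hpq.not_isEmptyCone, hk], q, hpq, rfl⟩
    · exact ⟨(q, k), by simp [hqp.not_isEmptyCone, hk], p, hqp, Sym2.eq_swap⟩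
  · rintro ⟨v, k⟩ - e₁ ⟨-, w₁, h₁, rfl⟩ e₂ ⟨-, w₂, h₂, rfl⟩
    rw [Subtype.ext (h₁.unique hP h₂)]

lemma card_filter_not_isEmptyCone_le (K : Finset (Fin 6)) (Q : Pt → Prop)
    (hK : ∀ k ∈ K, ∀ r, Cone k v r → Q r) :
    #{k ∈ K | ¬ IsEmptyCone P k v} ≤ #{r ∈ P | Q r} := by
  refine card_le_card_of_forall_subsingleton (fun k r => Cone k v r) ?_ ?_
  · intro k hk
    simp only [IsEmptyCone, mem_filter, not_forall, not_not] at hk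
    obtain ⟨hk, r, hr, hcone⟩ := hk
    exact ⟨r, mem_filter.2 ⟨hr, hK k hk r hcone⟩, hcone⟩
  · intro r _ k₁ h₁ k₂ h₂
    exact h₁.2.eq h₂.2

lemma card_not_isEmptyCone_add_card_isEmptyCone (K : Finset (Fin 6)) :
    #{s : {x // x ∈ P} × Fin 6 | ¬ IsEmptyCone P s.2 s.1 ∧ s.2 ∈ K} +
      #{s : {x // x ∈ P} × Fin 6 | ¬ IsEmptyCone P s.2 s.1 ∧ s.2 ∈ Kᶜ} +
      #{s : {x // x ∈ P} × Fin 6 | IsEmptyCone P s.2 s.1} = 6 * #P := by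
  simp only [← filter_filter, mem_compl, card_filter_add_card_filter_not]
  rw [add_comm, card_filter_add_card_filter_not, card_univ, Fintype.card_prod, Fintype.card_coe,
    Fintype.card_fin, mul_comm]

lemma card_le_card_above_add_card_below (hP : GenPos P) (hv : v ∈ P) :
    #P ≤ #{r ∈ P | cA v < cA r} + #{r ∈ P | cA r < cA v} + 1 := by
  calc #P ≤ #({r ∈ P | cA v < cA r} ∪ {r ∈ P | cA r < cA v} ∪ {v}) := by
        refine card_le_card fun r hr => ?_
        rcases eq_or_ne r v with rfl | hrv
        · simp
        rcases lt_or_gt_of_ne (hP.cA_ne hr hv hrv) with h | h <;> simp [hr, h]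
    _ ≤ _ := (card_union_le _ _).trans (by rw [card_singleton]; gcongr; exact card_union_le _ _)

lemma card_isEmptyCone_eq (v : Pt) :
    #{k | IsEmptyCone P k v} =
      #{k ∈ aboveCones | IsEmptyCone P k v} + #{k ∈ aboveConesᶜ | IsEmptyCone P k v} := by
  rw [← card_union_of_disjoint (disjoint_filter_filter disjoint_compl_right), ← filter_union,
    union_compl]

lemma tsub_card_above_le (v : Pt) :
    3 - #{r ∈ P | cA v < cA r} ≤ #{k ∈ aboveCones | IsEmptyCone P k v} := by
  have := card_filter_not_isEmptyCone_le (P := P) aboveCones (cA v < cA ·)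
    fun _ hk _ => Cone.cA_lt hk
  have := card_filter_add_card_filter_not (s := aboveCones) (IsEmptyCone P · v)
  have : #aboveCones = 3 := rfl
  omega

lemma tsub_card_below_le (v : Pt) :
    3 - #{r ∈ P | cA r < cA v} ≤ #{k ∈ aboveConesᶜ | IsEmptyCone P k v} := by
  have := card_filter_not_isEmptyCone_le (P := P) aboveConesᶜ (cA · < cA v)
    fun _ hk _ => Cone.lt_cA (mem_compl.1 hk)
  have := card_filter_add_card_filter_not (s := aboveConesᶜ) (IsEmptyCone P · v)
  have : #aboveConesᶜ = 3 := rfl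
  omega

lemma isEmptyCone_of_forall_cB_le (hw : ∀ r ∈ P, cB r ≤ cB w) :
    IsEmptyCone P 0 w ∧ IsEmptyCone P 1 w ∧ IsEmptyCone P 4 w := by
  have := cB_add_cC w
  refine ⟨fun r hr h => ?_, fun r hr h => ?_, fun r hr h => ?_⟩ <;>
    have := cB_add_cC r <;> have := hw r hr <;> simp only [Cone] at h <;> linarith

lemma thirteen_le_card_isEmptyCone (hP : GenPos P) (hn : 6 ≤ #P) :
    13 ≤ #{s : {x // x ∈ P} × Fin 6 | IsEmptyCone P s.2 s.1} := by
  obtain ⟨w, hw, hmax⟩ := P.exists_max_image cB (card_pos.1 (by omega))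
  have hle : ∀ v ∈ P, (3 - #{r ∈ P | cA v < cA r}) + (3 - #{r ∈ P | cA r < cA v})
      ≤ #{k | IsEmptyCone P k v} := fun v _ => by
    rw [card_isEmptyCone_eq]; exact add_le_add (tsub_card_above_le v) (tsub_card_below_le v)
  have hlt : (3 - #{r ∈ P | cA w < cA r}) + (3 - #{r ∈ P | cA r < cA w})
      < #{k | IsEmptyCone P k w} := by
    obtain ⟨h0, h1, h4⟩ := isEmptyCone_of_forall_cB_le hmax
    have habove : 2 ≤ #{k ∈ aboveCones | IsEmptyCone P k w} :=
      calc 2 = #({0, 1} : Finset (Fin 6)) := rfl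
        _ ≤ _ := card_le_card (by simp [subset_iff, aboveCones, h0, h1])
    have hbelow : 1 ≤ #{k ∈ aboveConesᶜ | IsEmptyCone P k w} :=
      calc 1 = #({4} : Finset (Fin 6)) := rfl
        _ ≤ _ := card_le_card (by simp [aboveCones, h4])
    have := card_le_card_above_add_card_below hP hw
    have := tsub_card_above_le (P := P) w
    have := tsub_card_below_le (P := P) w
    rw [card_isEmptyCone_eq]
    omega
  have hsum := sum_lt_sum hle ⟨w, hw, hlt⟩
  have habove := six_le_sum_tsub_card_filter_lt cA (s := P) (by omega)
  have hbelow := six_le_sum_tsub_card_filter_lt (fun z => OrderDual.toDual (cA z)) (s := P)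
    (by omega)
  have hcount : #{s : {x // x ∈ P} × Fin 6 | IsEmptyCone P s.2 s.1} =
      ∑ v ∈ P, #{k | IsEmptyCone P k v} := by
    rw [card_filter, Fintype.sum_prod_type, ← sum_coe_sort P]
    simp only [card_filter]
  rw [sum_add_distrib] at hsum
  change 6 ≤ ∑ x ∈ P, (3 - #{y ∈ P | cA y < cA x}) at hbelow
  omega

end Theta6

open Finset Theta6 in
/-- Every Θ₆-graph on `n ≥ 3` points in general position has at most `5n − 12` edges. -/
theorem theta6_edge_upper_bound (P : Finset Pt) (hP : GenPos P) (hn : 3 ≤ P.card) :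
    (theta6 P).edgeSet.ncard ≤ 5 * P.card - 12 := by
  rcases lt_or_ge #P 6 with hsmall | hlarge
  · have := (theta6 P).ncard_edgeSet_le_card_choose_two
    rw [Fintype.card_coe] at this
    interval_cases #P <;> simp only [Nat.choose] at this ⊢ <;> omega
  have hsplit : (theta6 P).edgeSet.ncard + (upGraph P ⊓ downGraph P).edgeSet.ncard =
      (upGraph P).edgeSet.ncard + (downGraph P).edgeSet.ncard := by
    rw [theta6_eq_sup, SimpleGraph.edgeSet_sup, SimpleGraph.edgeSet_inf,
      Set.ncard_union_add_ncard_inter]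
  have hboth := card_le_ncard_edgeSet_inf_add_one (card_pos.1 (by omega : 0 < #P))
  have hup := ncard_edgeSet_le_card_not_isEmptyCone hP (upGraph P) upCones fun p q h =>
    exists_isConeNbr_of_emptyUp hP p.2 q.2 (Subtype.coe_ne_coe.2 h.1) h.2
  have hdown := ncard_edgeSet_le_card_not_isEmptyCone hP (downGraph P) upConesᶜ fun p q h => by
    simpa only [mem_compl] using
      exists_isConeNbr_of_emptyDown hP p.2 q.2 (Subtype.coe_ne_coe.2 h.1) h.2
  have hslots := card_not_isEmptyCone_add_card_isEmptyCone (P := P) upCones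
  have hempty := thirteen_le_card_isEmptyCone hP hlarge
  omega
end
end

section
/- For every n ≥ 7, there exists a set P of n points in the plane in general position whose Θ6-graph G⋆(P) has exactly 5n − 17 edges. -/
noncomputable section

/-!
Four far-away corners enclose a cluster of `n - 4` points on a line steeper than 60°. Each
bottom corner sees every cluster point through an empty downward triangle, each top corner
through an empty upward one, and consecutive cluster points see each other, while both
triangles of two nonconsecutive cluster points contain the points between them. Among the
corners the four sides of the quadrilateral are edges, but both triangles of each diagonal
contain the first cluster point. So `G⋆(P)` has `4 + 4(n - 4) + (n - 5) = 5n - 17` edges: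
adding a cluster point adds exactly five.
-/

open Finset

/-- The point with cone coordinates `cA = v`, `cB = u + v`, `cC = v - u`; with `u, v` integers,
membership in the triangles becomes integer arithmetic. -/
def conePt (u v : ℤ) : Pt := (u / √3, v)

@[simp] lemma cA_conePt (u v : ℤ) : cA (conePt u v) = (v : ℝ) := rfl

@[simp] lemma cB_conePt (u v : ℤ) : cB (conePt u v) = ((u + v : ℤ) : ℝ) := by
  simp [cB, conePt, mul_div_cancel₀]

@[simp] lemma cC_conePt (u v : ℤ) : cC (conePt u v) = ((v - u : ℤ) : ℝ) := by
  simp [cC, conePt, mul_div_cancel₀]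
  ring

lemma conePt_mem_upTriInt_iff {u v u₁ v₁ u₂ v₂ : ℤ} :
    conePt u v ∈ upTriInt (conePt u₁ v₁) (conePt u₂ v₂) ↔
      min v₁ v₂ < v ∧ u + v < max (u₁ + v₁) (u₂ + v₂) ∧ v - u < max (v₁ - u₁) (v₂ - u₂) := by
  simp only [upTriInt, Set.mem_ofPred_eq, cA_conePt, cB_conePt, cC_conePt, ← Int.cast_min,
    ← Int.cast_max, Int.cast_lt]

lemma conePt_mem_downTriInt_iff {u v u₁ v₁ u₂ v₂ : ℤ} :
    conePt u v ∈ downTriInt (conePt u₁ v₁) (conePt u₂ v₂) ↔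
      v < max v₁ v₂ ∧ min (u₁ + v₁) (u₂ + v₂) < u + v ∧ min (v₁ - u₁) (v₂ - u₂) < v - u := by
  simp only [downTriInt, Set.mem_ofPred_eq, cA_conePt, cB_conePt, cC_conePt, ← Int.cast_min,
    ← Int.cast_max, Int.cast_lt]

lemma genPos_of_cone_ne {P : Finset Pt}
    (h : ∀ p ∈ P, ∀ q ∈ P, p ≠ q → cA p ≠ cA q ∧ cB p ≠ cB q ∧ cC p ≠ cC q) : GenPos P := by
  intro p hp q hq hpq
  obtain ⟨ha, hb, hc⟩ := h p hp q hq hpq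
  refine ⟨ha, fun h' => hc ?_, fun h' => hb ?_⟩ <;> simp only [cB, cC] <;> linarith

lemma not_emptyUp_or_emptyDown {P : Finset Pt} {p q r : Pt} (hr : r ∈ P)
    (h : r ∈ upTriInt p q ∩ downTriInt p q) : ¬ (EmptyUp P p q ∨ EmptyDown P p q) := by
  rintro (h' | h')
  exacts [h' r hr h.1, h' r hr h.2]

lemma SimpleGraph.two_mul_card_edgeFinset_comap_finVal (G : SimpleGraph ℕ) [DecidableRel G.Adj]
    (n : ℕ) :
    2 * #(G.comap ((↑) : Fin n → ℕ)).edgeFinset =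
      #((range n ×ˢ range n).filter fun p => G.Adj p.1 p.2) := by
  rw [two_mul_card_edgeFinset]
  refine card_bij (fun x _ => ((x.1 : ℕ), (x.2 : ℕ))) ?_ ?_ ?_
  · rintro ⟨a, b⟩ h
    simpa using h
  · rintro ⟨a, b⟩ _ ⟨c, d⟩ _ h
    simpa [Fin.ext_iff] using h
  · rintro ⟨a, b⟩ h
    simp only [mem_filter, mem_product, mem_range] at h
    exact ⟨(⟨a, h.1.1⟩, ⟨b, h.1.2⟩), by simpa using h.2, rfl⟩

/-- Indices `0, 1, 2, 3` are the bottom-left, bottom-right, top-left and top-right corners; the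
others form the cluster. The corners only need to be far enough out that each cone coordinate
of the cluster lies strictly between theirs. -/
def cfgCoords (m : ℕ) : ℕ → ℤ × ℤ
  | 0 => (-(10 * m + 100), -1)
  | 1 => (10 * m + 100, -2)
  | 2 => (-(10 * m + 100), 3 * m + 10)
  | 3 => (10 * m + 100, 3 * m + 11)
  | k + 4 => (k + 1, 3 * (k + 1))

def cfgPt (m i : ℕ) : Pt := conePt (cfgCoords m i).1 (cfgCoords m i).2

def cfg (m : ℕ) : Finset Pt := (range (m + 4)).image (cfgPt m)

/-- `i + j ≠ 3` removes the diagonals `{0, 3}` and `{1, 2}` of the corner quadrilateral. -/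
def cfgGraph : SimpleGraph ℕ where
  Adj i j := (i < 4 ∧ j < 4 ∧ i ≠ j ∧ i + j ≠ 3) ∨ (i < 4 ∧ 4 ≤ j) ∨ (4 ≤ i ∧ j < 4) ∨
    (4 ≤ i ∧ 4 ≤ j ∧ (i = j + 1 ∨ j = i + 1))
  symm := ⟨fun _ _ h => by omega⟩
  loopless := ⟨fun _ h => by omega⟩

lemma cfgGraph_adj {i j : ℕ} :
    cfgGraph.Adj i j ↔ (i < 4 ∧ j < 4 ∧ i ≠ j ∧ i + j ≠ 3) ∨ (i < 4 ∧ 4 ≤ j) ∨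
      (4 ≤ i ∧ j < 4) ∨ (4 ≤ i ∧ 4 ≤ j ∧ (i = j + 1 ∨ j = i + 1)) := Iff.rfl

instance : DecidableRel cfgGraph.Adj := fun _ _ => decidable_of_iff' _ cfgGraph_adj

section
variable {m : ℕ}

lemma cfgCoords_cone_ne {i j : ℕ} (hi : i < m + 4) (hj : j < m + 4) (hij : i ≠ j) :
    let z := cfgCoords m i; let w := cfgCoords m j
    z.2 ≠ w.2 ∧ z.1 + z.2 ≠ w.1 + w.2 ∧ z.2 - z.1 ≠ w.2 - w.1 := by
  rcases i with _ | _ | _ | _ | i <;> rcases j with _ | _ | _ | _ | j <;>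
    simp [cfgCoords] <;> omega

lemma cfgPt_injOn : Set.InjOn (cfgPt m) (range (m + 4)) := by
  intro i hi j hj h
  by_contra hij
  apply (cfgCoords_cone_ne (mem_range.1 hi) (mem_range.1 hj) hij).1
  simpa only [cfgPt, cA_conePt, Int.cast_inj] using congrArg cA h

lemma card_cfg : #(cfg m) = m + 4 := by
  rw [cfg, card_image_of_injOn cfgPt_injOn, card_range]

lemma genPos_cfg : GenPos (cfg m) := by
  refine genPos_of_cone_ne ?_
  simp only [cfg, mem_image, mem_range]
  rintro _ ⟨i, hi, rfl⟩ _ ⟨j, hj, rfl⟩ hne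
  have hij : i ≠ j := by rintro rfl; exact hne rfl
  simp only [cfgPt, cA_conePt, cB_conePt, cC_conePt, Ne, Int.cast_inj]
  exact cfgCoords_cone_ne hi hj hij

lemma emptyUp_cfg_iff {p q : Pt} :
    EmptyUp (cfg m) p q ↔ ∀ k < m + 4, cfgPt m k ∉ upTriInt p q := by
  simp [EmptyUp, cfg]

lemma emptyDown_cfg_iff {p q : Pt} :
    EmptyDown (cfg m) p q ↔ ∀ k < m + 4, cfgPt m k ∉ downTriInt p q := by
  simp [EmptyDown, cfg]

lemma emptyDown_cfg_bottom : EmptyDown (cfg m) (cfgPt m 0) (cfgPt m 1) := by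
  rw [emptyDown_cfg_iff]
  intro k hk
  rcases k with _ | _ | _ | _ | k <;>
    simp [cfgPt, cfgCoords, conePt_mem_downTriInt_iff] <;> omega

lemma emptyUp_cfg_top : EmptyUp (cfg m) (cfgPt m 2) (cfgPt m 3) := by
  rw [emptyUp_cfg_iff]
  intro k hk
  rcases k with _ | _ | _ | _ | k <;>
    simp [cfgPt, cfgCoords, conePt_mem_upTriInt_iff] <;> omega

lemma emptyUp_cfg_left : EmptyUp (cfg m) (cfgPt m 0) (cfgPt m 2) := by
  rw [emptyUp_cfg_iff]
  intro k hk
  rcases k with _ | _ | _ | _ | k <;>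
    simp [cfgPt, cfgCoords, conePt_mem_upTriInt_iff] <;> omega

lemma emptyDown_cfg_right : EmptyDown (cfg m) (cfgPt m 1) (cfgPt m 3) := by
  rw [emptyDown_cfg_iff]
  intro k hk
  rcases k with _ | _ | _ | _ | k <;>
    simp [cfgPt, cfgCoords, conePt_mem_downTriInt_iff] <;> omega

lemma emptyDown_cfg_bottom_cluster {i j : ℕ} (hi : i < 2) (hj : 4 ≤ j) (hjm : j < m + 4) :
    EmptyDown (cfg m) (cfgPt m i) (cfgPt m j) := by
  obtain ⟨j, rfl⟩ := Nat.exists_eq_add_of_le' hj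
  rw [emptyDown_cfg_iff]
  intro k hk
  interval_cases i <;> rcases k with _ | _ | _ | _ | k <;>
    simp [cfgPt, cfgCoords, conePt_mem_downTriInt_iff] <;> omega

lemma emptyUp_cfg_top_cluster {i j : ℕ} (hi : 2 ≤ i) (hi' : i < 4) (hj : 4 ≤ j)
    (hjm : j < m + 4) : EmptyUp (cfg m) (cfgPt m i) (cfgPt m j) := by
  obtain ⟨j, rfl⟩ := Nat.exists_eq_add_of_le' hj
  rw [emptyUp_cfg_iff]
  intro k hk
  interval_cases i <;> rcases k with _ | _ | _ | _ | k <;>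
    simp [cfgPt, cfgCoords, conePt_mem_upTriInt_iff] <;> omega

lemma emptyUp_cfg_cluster_succ {i : ℕ} (hi : 4 ≤ i) :
    EmptyUp (cfg m) (cfgPt m i) (cfgPt m (i + 1)) := by
  obtain ⟨i, rfl⟩ := Nat.exists_eq_add_of_le' hi
  rw [emptyUp_cfg_iff]
  intro k hk
  rcases k with _ | _ | _ | _ | k <;>
    simp [cfgPt, cfgCoords, conePt_mem_upTriInt_iff] <;> omega

lemma cfgPt_four_mem_diagonal {i j : ℕ} (h : (i, j) = (0, 3) ∨ (i, j) = (1, 2)) :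
    cfgPt m 4 ∈ upTriInt (cfgPt m i) (cfgPt m j) ∩ downTriInt (cfgPt m i) (cfgPt m j) := by
  rcases h with h | h <;> simp only [Prod.mk.injEq] at h <;> obtain ⟨rfl, rfl⟩ := h <;>
    simp [cfgPt, cfgCoords, conePt_mem_upTriInt_iff, conePt_mem_downTriInt_iff] <;> omega

lemma cfgPt_succ_mem_cluster {i j : ℕ} (hi : 4 ≤ i) (hij : i + 2 ≤ j) :
    cfgPt m (i + 1) ∈ upTriInt (cfgPt m i) (cfgPt m j) ∩ downTriInt (cfgPt m i) (cfgPt m j) := by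
  obtain ⟨i, rfl⟩ := Nat.exists_eq_add_of_le' hi
  obtain ⟨j, rfl⟩ := Nat.exists_eq_add_of_le' (hi.trans (Nat.le_add_right _ 2) |>.trans hij)
  simp [cfgPt, cfgCoords, conePt_mem_upTriInt_iff, conePt_mem_downTriInt_iff]
  omega

lemma emptyUp_or_emptyDown_cfg_iff_of_lt (hm : 1 ≤ m) {i j : ℕ} (hij : i < j) (hj : j < m + 4) :
    (EmptyUp (cfg m) (cfgPt m i) (cfgPt m j) ∨ EmptyDown (cfg m) (cfgPt m i) (cfgPt m j)) ↔
      cfgGraph.Adj i j := by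
  have hmem : ∀ {k}, k < m + 4 → cfgPt m k ∈ cfg m :=
    fun hk => mem_image_of_mem _ (mem_range.2 hk)
  by_cases hadj : cfgGraph.Adj i j
  · simp only [hadj, iff_true]
    rw [cfgGraph_adj] at hadj
    by_cases hj4 : j < 4
    · obtain ⟨rfl, rfl⟩ | ⟨rfl, rfl⟩ | ⟨rfl, rfl⟩ | ⟨rfl, rfl⟩ :
          (i = 0 ∧ j = 1) ∨ (i = 0 ∧ j = 2) ∨ (i = 1 ∧ j = 3) ∨ (i = 2 ∧ j = 3) := by omega
      exacts [.inr emptyDown_cfg_bottom, .inl emptyUp_cfg_left, .inr emptyDown_cfg_right,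
        .inl emptyUp_cfg_top]
    by_cases hi4 : i < 4
    · by_cases hi2 : i < 2
      exacts [.inr (emptyDown_cfg_bottom_cluster hi2 (by omega) hj),
        .inl (emptyUp_cfg_top_cluster (by omega) hi4 (by omega) hj)]
    obtain rfl : j = i + 1 := by omega
    exact .inl (emptyUp_cfg_cluster_succ (by omega))
  · simp only [hadj, iff_false]
    rw [cfgGraph_adj] at hadj
    by_cases hj4 : j < 4
    · have hdiag : (i, j) = (0, 3) ∨ (i, j) = (1, 2) := by simp only [Prod.mk.injEq]; omega
      exact not_emptyUp_or_emptyDown (hmem (by omega)) (cfgPt_four_mem_diagonal hdiag)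
    · have hcluster : 4 ≤ i ∧ i + 2 ≤ j := by omega
      exact not_emptyUp_or_emptyDown (hmem (by omega))
        (cfgPt_succ_mem_cluster hcluster.1 hcluster.2)

lemma emptyUp_or_emptyDown_cfg_iff (hm : 1 ≤ m) {i j : ℕ} (hij : i ≠ j) (hi : i < m + 4)
    (hj : j < m + 4) :
    (EmptyUp (cfg m) (cfgPt m i) (cfgPt m j) ∨ EmptyDown (cfg m) (cfgPt m i) (cfgPt m j)) ↔
      cfgGraph.Adj i j := by
  rcases hij.lt_or_gt with h | h
  · exact emptyUp_or_emptyDown_cfg_iff_of_lt hm h hj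
  · rw [EmptyUp, EmptyDown, upTriInt_comm, downTriInt_comm, ← EmptyUp, ← EmptyDown,
      emptyUp_or_emptyDown_cfg_iff_of_lt hm h hi, cfgGraph.adj_comm]

def cfgEquiv : Fin (m + 4) ≃ cfg m :=
  Equiv.ofBijective (fun i => ⟨cfgPt m i, mem_image_of_mem _ (mem_range.2 i.2)⟩)
    ⟨fun i j h =>
        Fin.ext (cfgPt_injOn (mem_range.2 i.2) (mem_range.2 j.2) (congrArg Subtype.val h)),
      fun ⟨_, hp⟩ => by
        obtain ⟨k, hk, rfl⟩ := mem_image.1 hp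
        exact ⟨⟨k, mem_range.1 hk⟩, rfl⟩⟩

def cfgIso (hm : 1 ≤ m) : cfgGraph.comap ((↑) : Fin (m + 4) → ℕ) ≃g theta6 (cfg m) where
  toEquiv := cfgEquiv
  map_rel_iff' {i j} := by
    change _ ∧ _ ↔ _
    rw [SimpleGraph.comap_adj, cfgEquiv.injective.ne_iff, Fin.ne_iff_vne]
    exact ⟨fun h => (emptyUp_or_emptyDown_cfg_iff hm h.1 i.2 j.2).1 h.2,
      fun h => ⟨h.ne, (emptyUp_or_emptyDown_cfg_iff hm h.ne i.2 j.2).2 h⟩⟩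

lemma cfgGraph_adjPairs_succ (hm : 1 ≤ m) :
    (range (m + 5) ×ˢ range (m + 5)).filter (fun p => cfgGraph.Adj p.1 p.2) =
      (range (m + 4) ×ˢ range (m + 4)).filter (fun p => cfgGraph.Adj p.1 p.2) ∪
        (({0, 1, 2, 3, m + 3} ×ˢ {m + 4}) ∪ ({m + 4} ×ˢ {0, 1, 2, 3, m + 3})) := by
  ext ⟨a, b⟩
  simp only [mem_filter, mem_product, mem_range, mem_union, mem_insert, mem_singleton,
    cfgGraph_adj]
  omega

lemma card_cfgGraph_adjPairs (hm : 1 ≤ m) :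
    #((range (m + 4) ×ˢ range (m + 4)).filter fun p => cfgGraph.Adj p.1 p.2) = 10 * m + 6 := by
  induction m, hm using Nat.le_induction with
  | base => decide
  | succ m hm ih =>
    rw [cfgGraph_adjPairs_succ hm, card_union_of_disjoint, ih, card_union_of_disjoint,
      card_product, card_product]
    · have h5 : #({0, 1, 2, 3, m + 3} : Finset ℕ) = 5 := by
        rw [card_insert_of_notMem, card_insert_of_notMem, card_insert_of_notMem, card_pair] <;>
          simp; omega
      rw [h5, card_singleton]
      ring
    all_goals
      rw [disjoint_left]
      rintro ⟨a, b⟩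
      simp only [mem_filter, mem_product, mem_range, mem_union, mem_insert, mem_singleton]
      omega

lemma ncard_edgeSet_theta6_cfg (hm : 1 ≤ m) : (theta6 (cfg m)).edgeSet.ncard = 5 * m + 3 := by
  classical
  have h := cfgGraph.two_mul_card_edgeFinset_comap_finVal (m + 4)
  rw [card_cfgGraph_adjPairs hm] at h
  rw [← SimpleGraph.coe_edgeFinset, Set.ncard_coe_finset, ← (cfgIso hm).card_edgeFinset_eq]
  omega

end

/-- For every `n ≥ 7` there is a set of `n` points in general position whose Θ₆-graph
has exactly `5n − 17` edges. -/
theorem theta6_many_edges (n : ℕ) (hn : 7 ≤ n) :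
    ∃ P : Finset Pt, P.card = n ∧ GenPos P ∧ (theta6 P).edgeSet.ncard = 5 * n - 17 := by
  obtain ⟨m, rfl⟩ : ∃ m, n = m + 4 := ⟨n - 4, by omega⟩
  refine ⟨cfg m, card_cfg, genPos_cfg, ?_⟩
  rw [ncard_edgeSet_theta6_cfg (by omega)]
  omega
end
end

section
/- There exists a set P of at least 11 points in the plane in general position such that every vertex of the Θ6-graph G⋆(P) has degree at least 7 (i.e., there are Θ6-graphs with minimum vertex degree 7). -/
noncomputable section

/-!
The example is a 14-point configuration on the lattice `{(x / √3, y) : x, y ∈ ℤ}`. On this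
lattice the three cone coordinates `cA, cB, cC` take the integer values `y, x + y, y - x`, so
general position, emptiness of the triangles `△(p,q)`, `▽(p,q)` and hence all degrees of the
Θ₆-graph become finite computations with integers.
-/

namespace Theta6

lemma genPos_iff_coneCoords_ne (P : Finset Pt) :
    GenPos P ↔ ∀ p ∈ P, ∀ q ∈ P, p ≠ q → cA p ≠ cA q ∧ cB p ≠ cB q ∧ cC p ≠ cC q := by
  have hB : ∀ p q : Pt, cB p = cB q ↔ q.2 - p.2 = -Real.sqrt 3 * (q.1 - p.1) := fun p q => by
    unfold cB; constructor <;> intro h <;> linarith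
  have hC : ∀ p q : Pt, cC p = cC q ↔ q.2 - p.2 = Real.sqrt 3 * (q.1 - p.1) := fun p q => by
    unfold cC; constructor <;> intro h <;> linarith
  simp only [GenPos, ne_eq, hB, hC, cA]
  exact forall₂_congr fun p _ => forall₂_congr fun q _ => imp_congr_right fun _ => by tauto

def latticePt (z : ℤ × ℤ) : Pt := ((z.1 : ℝ) / Real.sqrt 3, (z.2 : ℝ))

lemma latticePt_injective : Function.Injective latticePt := by
  intro a b h
  have hs : Real.sqrt 3 ≠ 0 := by positivity
  simp only [latticePt, Prod.mk.injEq, div_left_inj' hs, Int.cast_inj] at h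
  exact Prod.ext h.1 h.2

abbrev zA (z : ℤ × ℤ) : ℤ := z.2
abbrev zB (z : ℤ × ℤ) : ℤ := z.1 + z.2
abbrev zC (z : ℤ × ℤ) : ℤ := z.2 - z.1

@[simp] lemma cA_latticePt (z : ℤ × ℤ) : cA (latticePt z) = zA z := rfl

@[simp] lemma cB_latticePt (z : ℤ × ℤ) : cB (latticePt z) = zB z := by
  have hs : Real.sqrt 3 ≠ 0 := by positivity
  simp only [cB, latticePt, zB, Int.cast_add]
  field_simp

@[simp] lemma cC_latticePt (z : ℤ × ℤ) : cC (latticePt z) = zC z := by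
  have hs : Real.sqrt 3 ≠ 0 := by positivity
  simp only [cC, latticePt, zC, Int.cast_sub]
  field_simp
  ring

abbrev MemLatUpTriInt (p q r : ℤ × ℤ) : Prop :=
  min (zA p) (zA q) < zA r ∧ zB r < max (zB p) (zB q) ∧ zC r < max (zC p) (zC q)

abbrev MemLatDownTriInt (p q r : ℤ × ℤ) : Prop :=
  zA r < max (zA p) (zA q) ∧ min (zB p) (zB q) < zB r ∧ min (zC p) (zC q) < zC r

lemma latticePt_mem_upTriInt_iff (p q r : ℤ × ℤ) :
    latticePt r ∈ upTriInt (latticePt p) (latticePt q) ↔ MemLatUpTriInt p q r := by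
  simp only [upTriInt, Set.mem_ofPred_eq, cA_latticePt, cB_latticePt, cC_latticePt]
  norm_cast

lemma latticePt_mem_downTriInt_iff (p q r : ℤ × ℤ) :
    latticePt r ∈ downTriInt (latticePt p) (latticePt q) ↔ MemLatDownTriInt p q r := by
  simp only [downTriInt, Set.mem_ofPred_eq, cA_latticePt, cB_latticePt, cC_latticePt]
  norm_cast

variable (L : List (ℤ × ℤ))

abbrev LatAdj (a b : ℤ × ℤ) : Prop :=
  a ≠ b ∧ ((∀ r ∈ L, ¬ MemLatUpTriInt a b r) ∨ (∀ r ∈ L, ¬ MemLatDownTriInt a b r))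

lemma genPos_latticePt (hL : ∀ a ∈ L, ∀ b ∈ L, a ≠ b → zA a ≠ zA b ∧ zB a ≠ zB b ∧ zC a ≠ zC b) :
    GenPos (L.map latticePt).toFinset := by
  rw [genPos_iff_coneCoords_ne]
  simp only [List.mem_toFinset, List.mem_map]
  rintro _ ⟨a, ha, rfl⟩ _ ⟨b, hb, rfl⟩ hab
  simp only [cA_latticePt, cB_latticePt, cC_latticePt, ne_eq, Int.cast_inj]
  exact hL a ha b hb (ne_of_apply_ne _ hab)

lemma theta6_adj_latticePt_iff {a b : ℤ × ℤ} (v w : {x // x ∈ (L.map latticePt).toFinset})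
    (hv : v.1 = latticePt a) (hw : w.1 = latticePt b) :
    (theta6 (L.map latticePt).toFinset).Adj v w ↔ LatAdj L a b := by
  have hvw : v ≠ w ↔ a ≠ b := by
    rw [Ne, Ne, ← Subtype.val_inj, hv, hw, latticePt_injective.eq_iff]
  simp only [theta6, EmptyUp, EmptyDown, hv, hw, hvw, List.mem_toFinset, List.forall_mem_map,
    latticePt_mem_upTriInt_iff, latticePt_mem_downTriInt_iff]

lemma ncard_neighborSet_theta6_latticePt (hL : L.Nodup) {a : ℤ × ℤ}
    (v : {x // x ∈ (L.map latticePt).toFinset}) (hv : v.1 = latticePt a) :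
    ((theta6 (L.map latticePt).toFinset).neighborSet v).ncard =
      (L.filter (fun b => LatAdj L a b)).length := by
  have himage : Subtype.val '' (theta6 (L.map latticePt).toFinset).neighborSet v =
      latticePt '' ((L.filter (fun b => LatAdj L a b)).toFinset : Set (ℤ × ℤ)) := by
    ext x
    simp only [Set.mem_image, SimpleGraph.mem_neighborSet, Finset.mem_coe, List.mem_toFinset,
      List.mem_filter, decide_eq_true_eq]
    constructor
    · rintro ⟨w, hadj, rfl⟩
      obtain ⟨b, hb, hwb⟩ := List.mem_map.1 (List.mem_toFinset.1 w.2)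
      exact ⟨b, ⟨hb, (theta6_adj_latticePt_iff L v w hv hwb.symm).1 hadj⟩, hwb⟩
    · rintro ⟨b, ⟨hb, hadj⟩, rfl⟩
      have hbP : latticePt b ∈ (L.map latticePt).toFinset :=
        List.mem_toFinset.2 (List.mem_map_of_mem hb)
      exact ⟨⟨_, hbP⟩, (theta6_adj_latticePt_iff L v _ hv rfl).2 hadj, rfl⟩
  rw [← Set.ncard_image_of_injective _ Subtype.val_injective, himage,
    Set.ncard_image_of_injective _ latticePt_injective, Set.ncard_coe_finset,
    List.toFinset_card_of_nodup (hL.filter _)]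

end Theta6

open Theta6

def minDegreeSevenConfig : List (ℤ × ℤ) :=
  [(34, 2), (68, 46), (-62, -39), (-35, 79), (62, 75), (108, 38), (36, 29),
   (31, 40), (24, 31), (45, 21), (42, 45), (57, 49), (81, 52), (34, 22)]

lemma minDegreeSevenConfig_nodup : minDegreeSevenConfig.Nodup := by decide

lemma seven_le_length_filter_latAdj_minDegreeSevenConfig :
    ∀ a ∈ minDegreeSevenConfig,
      7 ≤ (minDegreeSevenConfig.filter (fun b => LatAdj minDegreeSevenConfig a b)).length := by
  decide

/-- There is a set `P` of at least 11 points in general position whose Θ₆-graph has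
minimum vertex degree at least 7. -/
theorem theta6_min_degree_seven :
    ∃ P : Finset Pt, GenPos P ∧ 11 ≤ P.card ∧
      ∀ v : {x // x ∈ P}, 7 ≤ ((theta6 P).neighborSet v).ncard := by
  refine ⟨(minDegreeSevenConfig.map latticePt).toFinset,
    genPos_latticePt _ (by decide), ?_, ?_⟩
  · rw [List.toFinset_card_of_nodup (minDegreeSevenConfig_nodup.map latticePt_injective),
      List.length_map]
    decide
  · intro v
    obtain ⟨a, ha, hv⟩ := List.mem_map.1 (List.mem_toFinset.1 v.2)
    rw [ncard_neighborSet_theta6_latticePt _ minDegreeSevenConfig_nodup v hv.symm]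
    exact seven_le_length_filter_latAdj_minDegreeSevenConfig a ha
end
end
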